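/- arXiv:2010.03327 — 6 statements merged into one kernel-verified Lean document; each statement's English description precedes it below -/
import Mathlib

section
/- Let T be a pruned tree on a non-empty countable set A and let X be the set of infinite branches of T with its cylinder-set topology. Let R ⊆ ℝ and let f : X → R (i.e., f : X → ℝ with range contained in R). Then Player I has a winning strategy in the game Γ_R(f) if and only if Player I has a winning strategy in the game Γ(f). -/
open Filter Topology

/-- The initial segment `(x₀, …, x_{n-1})` of an infinite sequence `x`. -/
def initSeg {β : Type*} (x : ℕ → β) (n : ℕ) : List β :=
  List.ofFn fun i : Fin n => x i

/-- `T` is a pruned tree on `A`: it contains the empty sequence, is closed under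
prefixes, and every element has a proper extension in `T`. -/
def IsPrunedTree {A : Type*} (T : Set (List A)) : Prop :=
  [] ∈ T ∧ (∀ s ∈ T, ∀ t : List A, t <+: s → t ∈ T) ∧ ∀ s ∈ T, ∃ a : A, s ++ [a] ∈ T

/-- The space `X` of infinite branches of the tree `T`, topologized as a subspace of
the product `ℕ → A` (with `A` discrete); this is exactly the cylinder-set topology. -/
abbrev Branches {A : Type*} (T : Set (List A)) : Type _ :=
  {x : ℕ → A // ∀ n : ℕ, initSeg x n ∈ T}

/-- The cylinder set `O(s)` of all branches with initial segment `s`. -/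
def cyl {A : Type*} (T : Set (List A)) (s : List A) : Set (Branches T) :=
  {x | initSeg x.val s.length = s}

/-- `f : X → ℝ` is a limsup function: there is `u` defined on finite sequences with
`f x = limsup_{t → ∞} u (x₀, …, x_t)` for every branch `x` (the limsup being computed
in the extended reals and required to equal the real number `f x`). -/
def IsLimsupFunction {A : Type*} {T : Set (List A)} (f : Branches T → ℝ) : Prop :=
  ∃ u : List A → ℝ, ∀ x : Branches T,
    (f x : EReal) = Filter.limsup (fun t : ℕ => (u (initSeg x.val (t + 1)) : EReal)) Filter.atTop

/-- `f` is of Baire class 1: a pointwise limit of continuous functions. -/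
def BaireClassOne {X : Type*} [TopologicalSpace X] (f : X → ℝ) : Prop :=
  ∃ g : ℕ → X → ℝ, (∀ n, Continuous (g n)) ∧
    ∀ x, Filter.Tendsto (fun n => g n x) Filter.atTop (nhds (f x))

/-- A Cantor set: a subset homeomorphic to the Cantor space `2^ℕ`. -/
def IsCantorSet {X : Type*} [TopologicalSpace X] (C : Set X) : Prop :=
  Nonempty (C ≃ₜ (ℕ → Bool))

/-- A Bernstein set: neither it nor its complement contains a nonempty perfect set. -/
def IsBernsteinSet {X : Type*} [TopologicalSpace X] (B : Set X) : Prop :=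
  ∀ P : Set X, Perfect P → P.Nonempty → ¬ P ⊆ B ∧ ¬ P ⊆ Bᶜ

/-- A co-analytic set: the complement of an analytic set. -/
def IsCoanalytic {X : Type*} [TopologicalSpace X] (s : Set X) : Prop :=
  MeasureTheory.AnalyticSet sᶜ

/-- The sequence of moves produced by Player I's strategy `σ` against the sequence `v`
of moves of Player II: Player I's `n`-th move depends on `(v₀, …, v_{n-1})`. -/
def playI {A M : Type*} (σ : List M → A) (v : ℕ → M) : ℕ → A :=
  fun n => σ (initSeg v n)

/-- Player II has a winning strategy in the game `Γ(f)`: a strategy for Player II assigns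
to each position `(x₀, …, x_t)` of moves of Player I a real number `v_t` (Player II's own
previous moves being determined), and it is winning if for every run, i.e. every branch
`x` that Player I may produce, `f x = limsup_{t → ∞} v_t`. -/
def PlayerIIWinsGamma {A : Type*} {T : Set (List A)} (f : Branches T → ℝ) : Prop :=
  ∃ τ : List A → ℝ, ∀ x : Branches T,
    (f x : EReal) = Filter.limsup (fun t : ℕ => (τ (initSeg x.val (t + 1)) : EReal)) Filter.atTop

/-- Player I has a winning strategy in the game `Γ_R(f)` where Player II's moves are
restricted to `R`: a strategy for Player I assigns to each position `(v₀, …, v_{n-1})` of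
moves of Player II a point of `A`, and it is winning if against every sequence of moves
of Player II in `R` the moves of Player I are legal (all initial segments lie in `T`) and
the resulting branch `x` satisfies `f x ≠ limsup_{t → ∞} v_t`. -/
def PlayerIWinsGammaR {A : Type*} {T : Set (List A)} (R : Set ℝ) (f : Branches T → ℝ) :
    Prop :=
  ∃ σ : List ℝ → A, ∀ v : ℕ → ℝ, (∀ t, v t ∈ R) →
    ∃ h : ∀ n : ℕ, initSeg (playI σ v) n ∈ T,
      (f ⟨playI σ v, h⟩ : EReal) ≠ Filter.limsup (fun t : ℕ => (v t : EReal)) Filter.atTop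

/-- Player I has a winning strategy in the game `Γ(f)`. -/
def PlayerIWinsGamma {A : Type*} {T : Set (List A)} (f : Branches T → ℝ) : Prop :=
  ∃ σ : List ℝ → A, ∀ v : ℕ → ℝ,
    ∃ h : ∀ n : ℕ, initSeg (playI σ v) n ∈ T,
      (f ⟨playI σ v, h⟩ : EReal) ≠ Filter.limsup (fun t : ℕ => (v t : EReal)) Filter.atTop

/-- Player II has a winning strategy in the game `Γ'(f)`, in which Player II's moves are
pairs `(v_t, w_t)` of reals and Player II wins a run iff
`f x = limsup_{t → ∞} v_t = liminf_{t → ∞} w_t`. -/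
def PlayerIIWinsGamma' {A : Type*} {T : Set (List A)} (f : Branches T → ℝ) : Prop :=
  ∃ τ : List A → ℝ × ℝ, ∀ x : Branches T,
    (f x : EReal) =
      Filter.limsup (fun t : ℕ => ((τ (initSeg x.val (t + 1))).1 : EReal)) Filter.atTop ∧
    (f x : EReal) =
      Filter.liminf (fun t : ℕ => ((τ (initSeg x.val (t + 1))).2 : EReal)) Filter.atTop

/-- Player I has a winning strategy in the game `Γ'(f)`. -/
def PlayerIWinsGamma' {A : Type*} {T : Set (List A)} (f : Branches T → ℝ) : Prop :=
  ∃ σ : List (ℝ × ℝ) → A, ∀ v : ℕ → ℝ × ℝ,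
    ∃ h : ∀ n : ℕ, initSeg (playI σ v) n ∈ T,
      ¬ ((f ⟨playI σ v, h⟩ : EReal) =
            Filter.limsup (fun t : ℕ => ((v t).1 : EReal)) Filter.atTop ∧
         (f ⟨playI σ v, h⟩ : EReal) =
            Filter.liminf (fun t : ℕ => ((v t).2 : EReal)) Filter.atTop)

namespace GammaAux

lemma initSeg_succ {β : Type*} (x : ℕ → β) (n : ℕ) :
    initSeg x (n + 1) = initSeg x n ++ [x n] := by
  rw [initSeg, List.ofFn_succ']
  simp [initSeg, List.concat_eq_append]

lemma initSeg_mapIdx {β γ : Type*} (v : ℕ → β) (ρ : ℕ → β → γ) (n : ℕ) :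
    (initSeg v n).mapIdx ρ = initSeg (fun t => ρ t (v t)) n := by
  induction n with
  | zero => simp [initSeg]
  | succ n ih =>
    rw [initSeg_succ, initSeg_succ, List.mapIdx_append, ih]
    simp [initSeg]

lemma key (L : ℝ) (v v' : ℕ → ℝ)
    (hd : ∀ t : ℕ, |v' t - v t| ≤ |v t - L| + 1 / ((t : ℝ) + 1))
    (hL : Filter.limsup (fun t : ℕ => ((v t : EReal))) Filter.atTop = (L : EReal)) :
    Filter.limsup (fun t : ℕ => ((v' t : EReal))) Filter.atTop = (L : EReal) := by
  have hsmall : ∀ ε : ℝ, 0 < ε → ∀ᶠ t : ℕ in atTop, 1 / ((t : ℝ) + 1) < ε := fun ε hε =>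
    tendsto_one_div_add_atTop_nhds_zero_nat.eventually_lt_const hε
  have hlt : ∀ ε : ℝ, 0 < ε → ∀ᶠ t : ℕ in atTop, v t < L + ε := by
    intro ε hε
    have : limsup (fun t : ℕ => ((v t : EReal))) atTop < ((L + ε : ℝ) : EReal) := by
      rw [hL]; exact_mod_cast (by linarith : L < L + ε)
    exact (eventually_lt_of_limsup_lt this).mono fun t ht => by exact_mod_cast ht
  apply le_antisymm
  · apply le_of_forall_gt_imp_ge_of_dense
    intro a ha
    induction a using EReal.rec with
    | bot => exact absurd ha (by simp)
    | top => exact le_top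
    | coe a =>
      have haL : L < a := by exact_mod_cast ha
      set ε : ℝ := (a - L) / 3 with hεdef
      have hε : 0 < ε := by simp only [hεdef]; linarith
      have : limsup (fun t : ℕ => ((v' t : EReal))) atTop ≤ ((L + 3 * ε : ℝ) : EReal) := by
        apply limsup_le_of_le isCobounded_le_of_bot
        filter_upwards [hlt ε hε, hsmall ε hε] with t h1 h2
        have h3 := hd t
        have h4 : v' t - v t ≤ |v' t - v t| := le_abs_self _
        have : v' t ≤ L + 3 * ε := by
          rcases abs_cases (v t - L) with ⟨he, _⟩ | ⟨he, _⟩ <;> rw [he] at h3 <;> linarith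
        exact_mod_cast this
      calc limsup (fun t : ℕ => ((v' t : EReal))) atTop ≤ ((L + 3 * ε : ℝ) : EReal) := this
        _ = (a : EReal) := by norm_cast; simp only [hεdef]; ring
  · apply le_of_forall_lt_imp_le_of_dense
    intro a ha
    induction a using EReal.rec with
    | bot => exact bot_le
    | top => exact absurd ha (by simp)
    | coe a =>
      have haL : a < L := by exact_mod_cast ha
      set ε : ℝ := (L - a) / 3 with hεdef
      have hε : 0 < ε := by simp only [hεdef]; linarith
      have hfr : ∃ᶠ t : ℕ in atTop, ((L - ε : ℝ) : EReal) < (v t : EReal) := by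
        apply frequently_lt_of_lt_limsup isCobounded_le_of_bot
        rw [hL]; exact_mod_cast (by linarith : L - ε < L)
      have : ((L - 3 * ε : ℝ) : EReal) ≤ limsup (fun t : ℕ => ((v' t : EReal))) atTop := by
        refine le_limsup_of_frequently_le ?_ isBounded_le_of_top
        apply (hfr.and_eventually ((hlt ε hε).and (hsmall ε hε))).mono
        rintro t ⟨h0, h1, h2⟩
        have h0' : L - ε < v t := by exact_mod_cast h0
        have h3 := hd t
        have h4 : -(v' t - v t) ≤ |v' t - v t| := neg_le_abs _
        have habs : |v t - L| < ε := abs_lt.2 ⟨by linarith, by linarith⟩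
        have : L - 3 * ε ≤ v' t := by linarith
        exact_mod_cast this
      calc (a : EReal) = ((L - 3 * ε : ℝ) : EReal) := by norm_cast; simp only [hεdef]; ring
        _ ≤ _ := this

lemma nonempty_branches {A : Type*} {T : Set (List A)} (hT : IsPrunedTree T) :
    Nonempty (Branches T) := by
  obtain ⟨h0, _, hext⟩ := hT
  choose e he using hext
  let g : ℕ → {l : List A // l ∈ T} := fun n =>
    Nat.rec ⟨[], h0⟩ (fun _ p => ⟨p.1 ++ [e p.1 p.2], he p.1 p.2⟩) n
  let x : ℕ → A := fun n => e (g n).1 (g n).2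
  have hg : ∀ n, (g n).1 = initSeg x n := by
    intro n
    induction n with
    | zero => simp [g, initSeg]
    | succ n ih =>
      rw [initSeg_succ, ← ih]
  exact ⟨⟨x, fun n => by rw [← hg n]; exact (g n).2⟩⟩

end GammaAux

open GammaAux



/-- For `R ⊆ ℝ` and `f : X → R`, Player I has a winning strategy in `Γ_R(f)` if and only
if Player I has a winning strategy in `Γ(f)`. -/
theorem playerI_wins_gammaR_iff_gamma
    {A : Type*} [Countable A] [Nonempty A] [TopologicalSpace A] [DiscreteTopology A]
    {T : Set (List A)} (hT : IsPrunedTree T) (R : Set ℝ) (f : Branches T → ℝ)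
    (hf : ∀ x, f x ∈ R) :
    PlayerIWinsGammaR R f ↔ PlayerIWinsGamma f := by
  constructor
  · rintro ⟨σ, hσ⟩
    obtain ⟨x0⟩ := nonempty_branches hT
    have hR : R.Nonempty := ⟨f x0, hf x0⟩
    have hchoice : ∀ t : ℕ, ∀ w : ℝ, ∃ r ∈ R, dist w r < Metric.infDist w R + 1 / ((t : ℝ) + 1) := by
      intro t w
      refine (Metric.infDist_lt_iff hR).1 ?_
      have : (0 : ℝ) < 1 / ((t : ℝ) + 1) := by positivity
      linarith
    choose ρ hρR hρd using hchoice
    refine ⟨fun l => σ (l.mapIdx ρ), ?_⟩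
    intro v
    set v' : ℕ → ℝ := fun t => ρ t (v t) with hv'
    have hplay : playI (fun l => σ (l.mapIdx ρ)) v = playI σ v' := by
      funext n
      show σ ((initSeg v n).mapIdx ρ) = σ (initSeg v' n)
      rw [initSeg_mapIdx]
    obtain ⟨h, hne⟩ := hσ v' (fun t => hρR t (v t))
    rw [hplay]
    refine ⟨h, ?_⟩
    intro heq
    have hd' : ∀ t : ℕ, |v' t - v t| ≤ |v t - f ⟨playI σ v', h⟩| + 1 / ((t : ℝ) + 1) := by
      intro t
      have h1 := hρd t (v t)
      have h2 : Metric.infDist (v t) R ≤ dist (v t) (f ⟨playI σ v', h⟩) :=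
        Metric.infDist_le_dist_of_mem (hf _)
      have h3 : |v' t - v t| = dist (v t) (v' t) := by rw [Real.dist_eq, abs_sub_comm]
      rw [h3, ← Real.dist_eq]
      linarith
    exact hne ((key _ v v' hd' heq.symm).symm)
  · rintro ⟨σ, hσ⟩
    exact ⟨σ, fun v _ => hσ v⟩
end

section
/- Let T be a pruned tree on a non-empty countable set A and let X be the set of infinite branches of T with its cylinder-set topology. For an arbitrary set H ⊆ X, the following are equivalent: (1) there exists a Cantor set C ⊆ X such that C ∩ H is meagre in C and dense in C; (2) there exists a Cantor set C ⊆ X such that C ∩ H is countable and dense in C. -/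
open Filter Topology

/-! Both conditions only concern the Cantor set `C`, so we may work in `2^ℕ`. Countable subsets of
a Cantor set are meagre because it has no isolated points. Conversely, let `s ⊆ 2^ℕ` be dense and
meagre, and let `V₀ ⊇ V₁ ⊇ ⋯` be dense open sets with `s ∩ ⋂ₖ Vₖ = ∅`. Build a binary tree of
cylinders, each labelled by a point of `s` inside it: the left child of a node keeps its label and
the right child at depth `k` is a cylinder inside `Vₖ` around a new point of `s`, disjoint from the
left child. The resulting map `2^ℕ → 2^ℕ` is an embedding with image `K`, say. A branch that turns
right infinitely often ends in `⋂ₖ Vₖ`, hence outside `s`; any other branch ends at a label, and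
every label is the end of such a branch. So `K ∩ s` is the countable set of labels, and it is dense
in `K` since labels lie in arbitrarily small cylinders around every point of `K`. -/

open Set Function PiNat

instance PiNat.perfectSpace {α : Type*} [TopologicalSpace α] [DiscreteTopology α] [Nontrivial α] :
    PerfectSpace (ℕ → α) := by
  refine perfectSpace_iff_forall_not_isolated.2 fun x => neBot_iff.2 fun hx => ?_
  rw [← isOpen_singleton_iff_punctured_nhds] at hx
  obtain ⟨_, ⟨y, n, rfl⟩, hxy, hsub⟩ :=
    (isTopologicalBasis_cylinders _).exists_subset_of_mem_open (mem_singleton x) hx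
  obtain ⟨a, ha⟩ := exists_ne (x n)
  rw [mem_cylinder_iff_eq] at hxy
  have := hsub (hxy ▸ update_mem_cylinder x n a)
  exact ha (by simpa using congr_fun this n)

theorem Set.Countable.isMeagre {X : Type*} [TopologicalSpace X] [T1Space X] [PerfectSpace X]
    {s : Set X} (hs : s.Countable) : IsMeagre s := by
  rw [← biUnion_of_singleton s]
  exact isMeagre_biUnion hs fun x _ =>
    (isClosed_singleton.isNowhereDense_iff.2 (interior_singleton x)).isMeagre

theorem IsMeagre.exists_antitone_isOpen_dense {X : Type*} [TopologicalSpace X] [BaireSpace X]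
    {s : Set X} (hs : IsMeagre s) :
    ∃ V : ℕ → Set X, Antitone V ∧ (∀ k, IsOpen (V k)) ∧ (∀ k, Dense (V k)) ∧
      Disjoint s (⋂ k, V k) := by
  obtain ⟨t, hts, htG, htd⟩ := mem_residual.1 hs
  obtain ⟨U, hUo, rfl⟩ := isGδ_iff_eq_iInter_nat.1 htG
  refine ⟨fun k => ⋂ i ∈ Finset.range (k + 1), U i, fun k l hkl => ?_,
    fun k => isOpen_biInter_finset fun i _ => hUo i,
    fun k => htd.mono (subset_iInter₂ fun i _ => iInter_subset U i), ?_⟩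
  · exact biInter_subset_biInter_left (by simpa using hkl)
  · refine disjoint_compl_right.mono_right (Subset.trans ?_ hts)
    exact iInter_mono fun k => biInter_subset_of_mem (Finset.self_mem_range_succ k)

namespace IsCantorSet

variable {X : Type*} [TopologicalSpace X] {C : Set X}

theorem isMeagre_of_countable (hC : IsCantorSet C) {s : Set C} (hs : s.Countable) :
    IsMeagre s := by
  obtain ⟨e⟩ := hC
  have := e.symm.isInducing.isMeagre_image (hs.image e).isMeagre
  rwa [Homeomorph.image_symm, e.preimage_image] at this

theorem image {Y : Type*} [TopologicalSpace Y] (hC : IsCantorSet C) {f : X → Y}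
    (hf : IsEmbedding f) : IsCantorSet (f '' C) :=
  let ⟨e⟩ := hC
  ⟨(hf.homeomorphImage C).symm.trans e⟩

end IsCantorSet

theorem exists_mem_cylinder_apply_ne_cylinder_subset {s U : Set (ℕ → Bool)} (hs : Dense s)
    (hU : IsOpen U) (hUd : Dense U) (x : ℕ → Bool) (n : ℕ) :
    ∃ y ∈ s, y ∈ cylinder x n ∧ y n ≠ x n ∧ ∃ m, n < m ∧ cylinder y m ⊆ U := by
  set W := cylinder (update x n (!x n)) (n + 1) ∩ U
  have hW : IsOpen W := (isOpen_cylinder _ _ _).inter hU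
  obtain ⟨y, hyW, hys⟩ := hs.inter_open_nonempty W hW
    (hUd.inter_open_nonempty _ (isOpen_cylinder _ _ _) ⟨_, self_mem_cylinder _ _⟩)
  obtain ⟨_, ⟨z, m, rfl⟩, hyz, hsub⟩ :=
    (isTopologicalBasis_cylinders _).exists_subset_of_mem_open hyW hW
  rw [mem_cylinder_iff_eq] at hyz
  refine ⟨y, hys, fun i hi => ?_, ?_, max m (n + 1), by omega,
    (cylinder_anti y (le_max_left _ _)).trans (hyz ▸ hsub.trans inter_subset_right)⟩
  · rw [hyW.1 i (by omega), update_of_ne (by omega)]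
  · simp [hyW.1 n (lt_add_one n)]

namespace CantorTree

/-- A node `(x, n)` of the tree stands for the cylinder `cylinder x n` labelled by its point `x`;
its children are `(x, n + 1)` and `next x n k`, where `k` is the depth of the node. -/
structure IsSplitting (next : (ℕ → Bool) → ℕ → ℕ → (ℕ → Bool) × ℕ) : Prop where
  mem_cylinder : ∀ x n k, (next x n k).1 ∈ cylinder x n
  apply_ne : ∀ x n k, (next x n k).1 n ≠ x n
  lt_snd : ∀ x n k, n < (next x n k).2

variable (next : (ℕ → Bool) → ℕ → ℕ → (ℕ → Bool) × ℕ) (x₀ : ℕ → Bool)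

def node (z : ℕ → Bool) : ℕ → (ℕ → Bool) × ℕ
  | 0 => (x₀, 0)
  | k + 1 => if z k then next (node z k).1 (node z k).2 k else ((node z k).1, (node z k).2 + 1)

def nodeCylinder (z : ℕ → Bool) (k : ℕ) : Set (ℕ → Bool) :=
  cylinder (node next x₀ z k).1 (node next x₀ z k).2

/-- The point of `⋂ k, nodeCylinder next x₀ z k`, read off coordinatewise: the cylinder at depth
`i + 1` has length `> i`. -/
def limit (z : ℕ → Bool) : ℕ → Bool := fun i => (node next x₀ z (i + 1)).1 i

variable {next x₀}

theorem node_congr {z w : ℕ → Bool} {k : ℕ} (h : ∀ i < k, z i = w i) :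
    node next x₀ z k = node next x₀ w k := by
  induction k with
  | zero => rfl
  | succ k ih => simp only [node, ih fun i hi => h i (by omega), h k (lt_add_one k)]

theorem finite_range_node_fst (k : ℕ) : (range fun z => (node next x₀ z k).1).Finite := by
  refine (finite_range fun r : Fin k → Bool =>
    (node next x₀ (fun i => if hi : i < k then r ⟨i, hi⟩ else false) k).1).subset ?_
  rintro _ ⟨z, rfl⟩
  exact ⟨fun i => z i, congrArg Prod.fst (node_congr fun i hi => by simp [hi])⟩

theorem node_fst_mem {s : Set (ℕ → Bool)} (hx₀ : x₀ ∈ s) (hs : ∀ x n k, (next x n k).1 ∈ s)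
    (z : ℕ → Bool) (k : ℕ) : (node next x₀ z k).1 ∈ s := by
  induction k with
  | zero => exact hx₀
  | succ k ih =>
    simp only [node]
    split
    exacts [hs _ _ _, ih]

theorem continuous_limit : Continuous (limit next x₀) := by
  refine continuous_pi fun i => IsLocallyConstant.continuous ?_
  refine (IsLocallyConstant.iff_eventually_eq _).2 fun z => ?_
  filter_upwards [(isOpen_cylinder _ z (i + 1)).mem_nhds (self_mem_cylinder z (i + 1))] with w hw
  simp only [limit, node_congr hw]

namespace IsSplitting

theorem le_node_snd (h : IsSplitting next) (z : ℕ → Bool) (k : ℕ) :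
    k ≤ (node next x₀ z k).2 := by
  induction k with
  | zero => exact Nat.zero_le _
  | succ k ih =>
    simp only [node]
    split
    · exact ih.trans_lt (h.lt_snd _ _ k)
    · exact Nat.succ_le_succ ih

theorem cylinder_next_subset (h : IsSplitting next) (x : ℕ → Bool) (n k : ℕ) :
    cylinder (next x n k).1 (next x n k).2 ⊆ cylinder x n := by
  rw [← mem_cylinder_iff_eq.1 (h.mem_cylinder x n k)]
  exact cylinder_anti _ (h.lt_snd x n k).le

theorem antitone_nodeCylinder (h : IsSplitting next) (z : ℕ → Bool) :
    Antitone (nodeCylinder next x₀ z) := by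
  refine antitone_nat_of_succ_le fun k => ?_
  simp only [nodeCylinder, node]
  split
  exacts [h.cylinder_next_subset _ _ k, cylinder_anti _ (Nat.le_succ _)]

theorem node_fst_mem_nodeCylinder (h : IsSplitting next) (z : ℕ → Bool) {j l : ℕ} (hjl : j ≤ l) :
    (node next x₀ z l).1 ∈ nodeCylinder next x₀ z j :=
  h.antitone_nodeCylinder z hjl (self_mem_cylinder _ _)

theorem limit_mem_nodeCylinder (h : IsSplitting next) (z : ℕ → Bool) (k : ℕ) :
    limit next x₀ z ∈ nodeCylinder next x₀ z k := by
  intro i hi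
  rcases le_total (i + 1) k with hik | hki
  · exact (h.node_fst_mem_nodeCylinder z hik i (h.le_node_snd z (i + 1))).symm
  · exact h.node_fst_mem_nodeCylinder z hki i hi

theorem tendsto_node_fst (h : IsSplitting next) (z : ℕ → Bool) :
    Tendsto (fun k => (node next x₀ z k).1) atTop (𝓝 (limit next x₀ z)) :=
  tendsto_pi_nhds.2 fun i => tendsto_atTop_of_eventually_const (i₀ := i + 1) fun k hk =>
    (h.limit_mem_nodeCylinder z k i ((Nat.lt_of_succ_le hk).trans_le (h.le_node_snd z k))).symm

theorem disjoint_cylinder_next (h : IsSplitting next) (x : ℕ → Bool) (n k : ℕ) :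
    Disjoint (cylinder x (n + 1)) (cylinder (next x n k).1 (next x n k).2) :=
  disjoint_left.2 fun _ hy hy' =>
    h.apply_ne x n k ((hy' n (h.lt_snd x n k)).symm.trans (hy n (lt_add_one n)))

theorem disjoint_nodeCylinder_succ (h : IsSplitting next) {z w : ℕ → Bool} {k : ℕ}
    (hzw : node next x₀ z k = node next x₀ w k) (hk : z k ≠ w k) :
    Disjoint (nodeCylinder next x₀ z (k + 1)) (nodeCylinder next x₀ w (k + 1)) := by
  simp only [nodeCylinder, node, hzw]
  cases hz : z k <;> cases hw : w k <;> simp only [hz, hw, ne_eq, not_true_eq_false] at hk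
  · exact h.disjoint_cylinder_next _ _ k
  · exact (h.disjoint_cylinder_next _ _ k).symm

theorem limit_injective (h : IsSplitting next) : Injective (limit next x₀) := by
  intro z w hzw
  by_contra hne
  refine (h.disjoint_nodeCylinder_succ (k := firstDiff z w)
    (node_congr fun i hi => apply_eq_of_lt_firstDiff hi) (apply_firstDiff_ne hne)).ne_of_mem
    (h.limit_mem_nodeCylinder z _) (h.limit_mem_nodeCylinder w _) hzw

theorem isCantorSet_range_limit (h : IsSplitting next) : IsCantorSet (range (limit next x₀)) :=
  ⟨(continuous_limit.isClosedEmbedding h.limit_injective).toIsEmbedding.toHomeomorph.symm⟩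

theorem limit_eq_node_fst (h : IsSplitting next) {z : ℕ → Bool} {m : ℕ}
    (hz : ∀ j ≥ m, z j = false) : limit next x₀ z = (node next x₀ z m).1 := by
  refine tendsto_nhds_unique (h.tendsto_node_fst z) (tendsto_atTop_of_eventually_const
    fun j (hj : m ≤ j) => ?_)
  induction j, hj using Nat.le_induction with
  | base => rfl
  | succ j hmj ih => simp [node, hz j hmj, ih]

theorem node_fst_mem_range_limit (h : IsSplitting next) (z : ℕ → Bool) (k : ℕ) :
    (node next x₀ z k).1 ∈ range (limit next x₀) := by
  refine ⟨fun i => if i < k then z i else false, ?_⟩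
  rw [h.limit_eq_node_fst (m := k) fun j hj => if_neg (not_lt.2 hj)]
  exact congrArg Prod.fst (node_congr fun i hi => if_pos hi)

theorem limit_mem_iInter (h : IsSplitting next) {V : ℕ → Set (ℕ → Bool)} (hV : Antitone V)
    (hnextV : ∀ x n k, cylinder (next x n k).1 (next x n k).2 ⊆ V k) {z : ℕ → Bool}
    (hz : ∃ᶠ j in atTop, z j = true) : limit next x₀ z ∈ ⋂ k, V k := by
  refine mem_iInter.2 fun k => ?_
  obtain ⟨j, hkj, hj⟩ := frequently_atTop.1 hz k
  refine hV hkj (hnextV (node next x₀ z j).1 (node next x₀ z j).2 j ?_)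
  simpa [nodeCylinder, node, hj] using h.limit_mem_nodeCylinder z (j + 1)

theorem countable_range_limit_inter (h : IsSplitting next) {s : Set (ℕ → Bool)}
    {V : ℕ → Set (ℕ → Bool)} (hV : Antitone V)
    (hnextV : ∀ x n k, cylinder (next x n k).1 (next x n k).2 ⊆ V k)
    (hsV : Disjoint s (⋂ k, V k)) : (range (limit next x₀) ∩ s).Countable := by
  refine (countable_iUnion fun k =>
    (finite_range_node_fst (next := next) (x₀ := x₀) k).countable).mono ?_
  rintro _ ⟨⟨z, rfl⟩, hzs⟩
  have : ¬ ∃ᶠ j in atTop, z j = true := fun hz =>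
    hsV.ne_of_mem hzs (h.limit_mem_iInter hV hnextV hz) rfl
  obtain ⟨m, hm⟩ := eventually_atTop.1 (not_frequently.1 this)
  exact mem_iUnion.2 ⟨m, z, (h.limit_eq_node_fst fun j hj => by simpa using hm j hj).symm⟩

theorem range_limit_subset_closure_inter (h : IsSplitting next) {s : Set (ℕ → Bool)}
    (hx₀ : x₀ ∈ s) (hs : ∀ x n k, (next x n k).1 ∈ s) :
    range (limit next x₀) ⊆ closure (range (limit next x₀) ∩ s) := by
  rintro _ ⟨z, rfl⟩
  exact mem_closure_of_tendsto (h.tendsto_node_fst z) (Eventually.of_forall fun k =>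
    ⟨h.node_fst_mem_range_limit z k, node_fst_mem hx₀ hs z k⟩)

end IsSplitting

end CantorTree

open CantorTree in
theorem exists_isCantorSet_countable_inter_subset_closure {s : Set (ℕ → Bool)} (hd : Dense s)
    (hm : IsMeagre s) : ∃ K, IsCantorSet K ∧ (K ∩ s).Countable ∧ K ⊆ closure (K ∩ s) := by
  obtain ⟨V, hV, hVo, hVd, hsV⟩ := hm.exists_antitone_isOpen_dense
  obtain ⟨x₀, hx₀⟩ := hd.nonempty
  choose y hys hyx hyne m hnm hmV using fun x n k =>
    exists_mem_cylinder_apply_ne_cylinder_subset hd (hVo k) (hVd k) x n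
  have h : IsSplitting fun x n k => (y x n k, m x n k) := ⟨hyx, hyne, hnm⟩
  exact ⟨_, h.isCantorSet_range_limit (x₀ := x₀), h.countable_range_limit_inter hV hmV hsV,
    h.range_limit_subset_closure_inter hx₀ hys⟩

theorem IsCantorSet.exists_isCantorSet_countable_dense {X : Type*} [TopologicalSpace X]
    {C H : Set X} (hC : IsCantorSet C) (hm : IsMeagre (Subtype.val ⁻¹' H : Set C))
    (hd : Dense (Subtype.val ⁻¹' H : Set C)) :
    ∃ C' : Set X, IsCantorSet C' ∧ (C' ∩ H).Countable ∧ Dense (Subtype.val ⁻¹' H : Set C') := by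
  obtain ⟨e⟩ := hC
  let g : (ℕ → Bool) → X := Subtype.val ∘ e.symm
  have hg : IsEmbedding g := IsEmbedding.subtypeVal.comp e.symm.isEmbedding
  have hpre : g ⁻¹' H = e '' (Subtype.val ⁻¹' H) := by
    rw [e.image_eq_preimage_symm]; rfl
  obtain ⟨K, hK, hKc, hKd⟩ := exists_isCantorSet_countable_inter_subset_closure
    (hpre ▸ e.surjective.denseRange.dense_image e.continuous hd)
    (hpre ▸ e.isInducing.isMeagre_image hm)
  refine ⟨g '' K, hK.image hg, ?_, ?_⟩
  · rw [← image_inter_preimage]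
    exact hKc.image g
  · rw [Subtype.dense_iff, Subtype.image_preimage_coe, ← image_inter_preimage]
    exact (image_mono hKd).trans (image_closure_subset_closure_image hg.continuous)

theorem exists_cantor_meagre_dense_iff_countable_dense_general
    {A : Type*} [TopologicalSpace A]
    {T : Set (List A)} (H : Set (Branches T)) :
    (∃ C : Set (Branches T), IsCantorSet C ∧
        IsMeagre (Subtype.val ⁻¹' H : Set ↥C) ∧ Dense (Subtype.val ⁻¹' H : Set ↥C)) ↔
    (∃ C : Set (Branches T), IsCantorSet C ∧
        (C ∩ H).Countable ∧ Dense (Subtype.val ⁻¹' H : Set ↥C)) := by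
  constructor
  · rintro ⟨C, hC, hm, hd⟩
    exact hC.exists_isCantorSet_countable_dense hm hd
  · rintro ⟨C, hC, hc, hd⟩
    refine ⟨C, hC, hC.isMeagre_of_countable ?_, hd⟩
    rw [← Subtype.preimage_coe_self_inter]
    exact hc.preimage Subtype.val_injective

/-- For an arbitrary set `H ⊆ X`: there is a Cantor set `C ⊆ X` such that `C ∩ H` is
meagre and dense in `C` if and only if there is a Cantor set `C ⊆ X` such that `C ∩ H` is
countable and dense in `C`. -/
theorem exists_cantor_meagre_dense_iff_countable_dense
    {A : Type*} [Countable A] [Nonempty A] [TopologicalSpace A] [DiscreteTopology A]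
    {T : Set (List A)} (hT : IsPrunedTree T) (H : Set (Branches T)) :
    (∃ C : Set (Branches T), IsCantorSet C ∧
        IsMeagre (Subtype.val ⁻¹' H : Set ↥C) ∧ Dense (Subtype.val ⁻¹' H : Set ↥C)) ↔
    (∃ C : Set (Branches T), IsCantorSet C ∧
        (C ∩ H).Countable ∧ Dense (Subtype.val ⁻¹' H : Set ↥C)) :=
  exists_cantor_meagre_dense_iff_countable_dense_general H
end

section
/- There exists a function f : ℕ^ℕ → ℕ (regarded as a real-valued function on the Baire space ℕ^ℕ) such that Player I has a winning strategy in the game Γ(f) on the full tree of finite sequences of natural numbers, and for each r ∈ ℝ and each Cantor set C ⊆ ℕ^ℕ, the set C ∩ {x ∈ ℕ^ℕ : f(x) ≥ r} is uncountable. -/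
open Filter Topology

/-!
Player I answers each move `v_t` of Player II by `⌈v_t⌉₊`. The resulting run `x` is either
unbounded, and then `limsup v = ⊤`, or bounded, and then `limsup v ≤ sup x`; so Player I wins
as soon as `f x > sup x` on bounded sequences. To make `{f ≥ r}` meet every Cantor set in an
uncountable set, add to `sup x + 1` a Bernstein-type label `ℓ x ∈ ℕ`: as there are only `𝔠`
Cantor sets, each of size `𝔠`, a transfinite recursion of length `𝔠` assigns to every Cantor set
and every label continuum many distinct points of that set.
-/

open Cardinal Function Set

universe u

local notation "𝒩" => Branches (Set.univ : Set (List ℕ))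

theorem exists_injective_forall_mem {ι X : Type u} (S : ι → Set X) (hS : ∀ i, #ι ≤ #(S i)) :
    ∃ f : ι → X, Injective f ∧ ∀ i, f i ∈ S i := by
  obtain ⟨r, _, hr⟩ := exists_ord_eq ι
  -- Fewer than `#ι` points have been chosen before stage `i`, so `S i` still has a fresh one.
  have fresh : ∀ (i : ι) (g : ∀ j, r j i → X),
      (S i \ range (fun j : {j // r j i} => g j.1 j.2)).Nonempty := by
    intro i g
    refine nonempty_of_not_subset fun hsub => (hS i).not_gt ?_
    calc #(S i) ≤ #(range fun j : {j // r j i} => g j.1 j.2) := mk_le_mk_of_subset hsub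
      _ ≤ #{j // r j i} := mk_range_le
      _ < #ι := Ordinal.card_typein (r := r) i ▸ card_typein_lt i hr
  let f : ι → X := IsWellFounded.wf.fix fun i g => (fresh i g).some
  have hf : ∀ i, f i ∈ S i \ range (fun j : {j // r j i} => f j.1) := fun i => by
    rw [show f i = _ from IsWellFounded.wf.fix_eq _ i]
    exact (fresh i fun j _ => f j).some_mem
  refine ⟨f, fun i j hij => ?_, fun i => (hf i).1⟩
  by_contra hne
  rcases trichotomous_of r i j with hlt | heq | hgt
  · exact (hf j).2 ⟨⟨i, hlt⟩, hij⟩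
  · exact hne heq
  · exact (hf i).2 ⟨⟨j, hgt⟩, hij.symm⟩

theorem mk_cantorSpace : #(ℕ → Bool) = 𝔠 := by
  simp

theorem IsCantorSet.mk_eq {X : Type*} [TopologicalSpace X] {C : Set X} (hC : IsCantorSet C) :
    #C = 𝔠 := by
  obtain ⟨e⟩ := hC
  simpa [mk_cantorSpace] using lift_mk_eq'.mpr ⟨e.toEquiv⟩

-- A Cantor set is the image of a continuous map on `2^ℕ`, determined by its values on a
-- countable dense set.
theorem mk_setOf_isCantorSet_le {X : Type u} [TopologicalSpace X] [T2Space X] (hX : #X ≤ 𝔠) :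
    #{C : Set X // IsCantorSet C} ≤ 𝔠 := by
  obtain ⟨d, hd⟩ := TopologicalSpace.exists_dense_seq (ℕ → Bool)
  let param (C : {C : Set X // IsCantorSet C}) : (ℕ → Bool) → X :=
    Subtype.val ∘ (Classical.choice C.2).symm
  have range_param (C) : range (param C) = C.1 := by
    rw [range_comp, (Classical.choice C.2).symm.surjective.range_eq, image_univ,
      Subtype.range_coe]
  have param_inj : Injective fun C n => param C (d n) := fun C C' h => by
    have := hd.equalizer
      (continuous_subtype_val.comp (Classical.choice C.2).symm.continuous)
      (continuous_subtype_val.comp (Classical.choice C'.2).symm.continuous) h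
    exact Subtype.ext <| by rw [← range_param C, ← range_param C']; exact congrArg range this
  calc #{C : Set X // IsCantorSet C} ≤ #(ℕ → X) := mk_le_of_injective param_inj
    _ = #X ^ ℵ₀ := by simp
    _ ≤ 𝔠 ^ ℵ₀ := power_le_power_right hX
    _ = 𝔠 := continuum_power_aleph0

theorem not_countable_cantorSpace : ¬ Countable (ℕ → Bool) := fun h =>
  (mk_le_aleph0_iff.2 h).not_gt (mk_cantorSpace ▸ aleph0_lt_continuum)

-- Choose points injectively, one for each triple (Cantor set, label, point of `2^ℕ`).
theorem exists_label_not_countable_inter_fiber {X : Type u} [TopologicalSpace X] [T2Space X]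
    (hX : #X ≤ 𝔠) :
    ∃ ℓ : X → ℕ, ∀ C, IsCantorSet C → ∀ n, ¬ (C ∩ ℓ ⁻¹' {n}).Countable := by
  let ι := {C : Set X // IsCantorSet C} × ℕ × (ℕ → Bool)
  have card_ι : #ι ≤ 𝔠 := by
    simp only [ι, mk_prod, lift_id, lift_uzero, mk_nat, mk_cantorSpace, lift_mul, lift_aleph0,
      lift_continuum]
    exact mul_le_of_le aleph0_le_continuum (mk_setOf_isCantorSet_le hX)
      (mul_le_of_le aleph0_le_continuum aleph0_le_continuum le_rfl)
  obtain ⟨F, hF, hFC⟩ := exists_injective_forall_mem (fun p : ι => p.1.1)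
    fun p => card_ι.trans (p.1.2.mk_eq).ge
  refine ⟨extend F (fun p => p.2.1) 0, fun C hC n hcount => not_countable_cantorSpace ?_⟩
  have mem_fiber (j : ℕ → Bool) : F (⟨C, hC⟩, n, j) ∈ C ∩ extend F (fun p => p.2.1) 0 ⁻¹' {n} :=
    ⟨hFC (⟨C, hC⟩, n, j), hF.extend_apply _ _ _⟩
  have point_inj : Injective fun j => F (⟨C, hC⟩, n, j) :=
    hF.comp fun j j' h => congrArg (fun p : ι => p.2.2) h
  have := hcount.to_subtype
  exact (point_inj.codRestrict mem_fiber).countable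

noncomputable def ceilStrategy (l : List ℝ) : ℕ := ⌈l.getLastD 0⌉₊

theorem playI_ceilStrategy_succ (v : ℕ → ℝ) (t : ℕ) :
    playI ceilStrategy v (t + 1) = ⌈v t⌉₊ := by
  rw [playI, initSeg, List.ofFn_succ', ceilStrategy, List.concat_eq_append, List.getLastD_concat,
    Fin.val_last]

theorem playerIWinsGamma_of_add_one_le {f : 𝒩 → ℝ}
    (hf : ∀ x : 𝒩, BddAbove (range x.1) → ∀ n, (x.1 n : ℝ) + 1 ≤ f x) :
    PlayerIWinsGamma f := by
  refine ⟨ceilStrategy, fun v => ⟨fun _ => mem_univ _, fun hlim => ?_⟩⟩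
  set x : 𝒩 := ⟨playI ceilStrategy v, fun _ => mem_univ _⟩
  have v_lt : ∀ᶠ t in atTop, (v t : EReal) < (f x + 1 : ℝ) :=
    eventually_lt_of_limsup_lt (hlim ▸ by exact_mod_cast lt_add_one (f x))
  have x_bdd : BddAbove (range x.1) := by
    refine IsBoundedUnder.bddAbove_range ⟨⌈f x + 1⌉₊, ?_⟩
    rw [eventually_map, ← map_add_atTop_eq_nat 1, eventually_map]
    filter_upwards [v_lt] with t ht
    simpa [x, playI_ceilStrategy_succ] using Nat.ceil_mono (EReal.coe_lt_coe_iff.1 ht).le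
  have limsup_le : limsup (fun t => (v t : EReal)) atTop ≤ (f x - 1 : ℝ) := by
    refine limsup_le_of_le (by isBoundedDefault) (Eventually.of_forall fun t => ?_)
    have := hf x x_bdd (t + 1)
    simp only [x, playI_ceilStrategy_succ] at this
    exact EReal.coe_le_coe_iff.2 <| by linarith [Nat.le_ceil (v t)]
  exact (hlim ▸ limsup_le).not_gt (by exact_mod_cast sub_one_lt (f x))

/-- There is an `ℕ`-valued function `f` on the Baire space `ℕ^ℕ` (the branches of the full
tree of finite sequences of naturals) such that Player I has a winning strategy in `Γ(f)`
and `C ∩ {f ≥ r}` is uncountable for every `r ∈ ℝ` and every Cantor set `C ⊆ ℕ^ℕ`. -/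
theorem exists_nat_valued_playerI_wins_uncountable :
    ∃ f : Branches (Set.univ : Set (List ℕ)) → ℝ,
      (∀ x, ∃ n : ℕ, f x = n) ∧
      PlayerIWinsGamma f ∧
      ∀ (r : ℝ) (C : Set (Branches (Set.univ : Set (List ℕ)))),
        IsCantorSet C → ¬ (C ∩ {x | r ≤ f x}).Countable := by
  classical
  obtain ⟨ℓ, hℓ⟩ := exists_label_not_countable_inter_fiber (X := 𝒩)
    ((mk_subtype_le _).trans (by simp))
  -- The value on unbounded runs is irrelevant for the game: there `limsup v = ⊤`.
  let f (x : 𝒩) : ℕ :=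
    ℓ x + if BddAbove (range x.1) then sSup (range x.1) + 1 else 0
  refine ⟨fun x => f x, fun x => ⟨f x, rfl⟩, playerIWinsGamma_of_add_one_le fun x hx n => ?_,
    fun r C hC hcount => ?_⟩
  · have : x.1 n + 1 ≤ f x := by
      simp only [f, if_pos hx]
      exact le_add_left (Nat.add_le_add_right (le_csSup hx ⟨n, rfl⟩) 1)
    exact_mod_cast this
  · obtain ⟨n, hn⟩ := exists_nat_ge r
    refine hℓ C hC n (hcount.mono ?_)
    rintro x ⟨hxC, hxn : ℓ x = n⟩
    have : n ≤ f x := hxn ▸ Nat.le_add_right (ℓ x) _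
    exact ⟨hxC, hn.trans (Nat.cast_le.2 this)⟩
end

section
/- Let R ⊆ ℝ be a set containing an infinite strictly increasing sequence. Then there exists a function f : ℕ^ℕ → ℝ with range contained in R such that Player I has a winning strategy in the game Γ(f) on the full tree of finite sequences of natural numbers, and for each r ∈ ℝ and each Cantor set C ⊆ ℕ^ℕ, the set C ∩ {x ∈ ℕ^ℕ : f(x) ≥ r} is either uncountable or empty. -/
open Filter Topology

/-!
Partition `ℕ^ℕ` into the countable set `D` of eventually constant sequences and its complement.
By a transfinite construction of length `𝔠` (there are only `𝔠` Cantor sets, each of size `𝔠`)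
there is `φ : ℕ^ℕ → ℕ` every fibre of which meets every Cantor set outside `D` in uncountably
many points. Put `f x = g (c + 1)` if `x` is eventually equal to `c`, and `f x = g (φ x)`
otherwise. Player I plays the number `k` of times Player II has reached the current target
`g k`: if this count stabilises at `c`, then `limsup v ≤ g c < f x`; otherwise the run is not in
`D` and `limsup v ≥ sup g > f x`.
-/

open Set Cardinal

theorem exists_injective_forall_mem_of_mk_Iio_lt {ι X : Type*} [LinearOrder ι] [WellFoundedLT ι]
    (A : ι → Set X) (hA : ∀ i, lift.{u_2} #(Iio i) < lift.{u_1} #(A i)) :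
    ∃ p : ι → X, Function.Injective p ∧ ∀ i, p i ∈ A i := by
  have hfresh : ∀ i (q : Iio i → X), (A i \ range q).Nonempty := by
    intro i q
    refine nonempty_of_not_subset fun hsub => (hA i).not_ge ?_
    calc lift #(A i) ≤ lift #(range q) := lift_le.2 (mk_le_mk_of_subset hsub)
      _ ≤ lift #(Iio i) := mk_range_le_lift
  let p : ι → X := wellFounded_lt.fix fun i rec => (hfresh i fun j => rec j j.2).some
  have hp : ∀ i, p i ∈ A i \ range fun j : Iio i => p j := fun i => by
    rw [show p i = _ from wellFounded_lt.fix_eq _ i]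
    exact (hfresh i _).some_mem
  refine ⟨p, fun i j hij => ?_, fun i => (hp i).1⟩
  by_contra hne
  rcases lt_or_gt_of_ne hne with h | h
  · exact (hp j).2 ⟨⟨i, h⟩, hij⟩
  · exact (hp i).2 ⟨⟨j, h⟩, hij.symm⟩

theorem exists_nat_fibers_le_mk_inter {X : Type*} {κ : Cardinal} (hκ : ℵ₀ ≤ κ) (S : Set (Set X))
    (hS : #S ≤ κ) (hsS : ∀ s ∈ S, κ ≤ #s) :
    ∃ φ : X → ℕ, ∀ s ∈ S, ∀ n, κ ≤ #↥(s ∩ φ ⁻¹' {n}) := by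
  rcases isEmpty_or_nonempty S with hSe | hSne
  · exact ⟨0, fun s hs => (hSe.false ⟨s, hs⟩).elim⟩
  let ι := κ.ord.ToType
  have : Nonempty ι := by
    rw [← mk_ne_zero_iff, mk_ord_toType]
    exact (aleph0_pos.trans_le hκ).ne'
  have hIio (i : ι) : #(Iio i) < κ := by
    refine (mk_Iio_lt i ?_).trans_eq (mk_ord_toType κ)
    rw [mk_ord_toType, Ordinal.type_toType]
  -- each pair `(s, n)` is listed `κ` times, so that it receives `κ` distinct points
  obtain ⟨emb⟩ : Nonempty (S × ℕ × ι ↪ ι) := by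
    rw [← Cardinal.le_def]
    simpa [ι, mk_prod] using mul_le_of_le hκ hS (mul_le_of_le hκ hκ le_rfl)
  let e : ι → S × ℕ × ι := Function.invFun emb
  have he : Function.Surjective e := Function.invFun_surjective emb.injective
  obtain ⟨p, hp_inj, hp⟩ := exists_injective_forall_mem_of_mk_Iio_lt (fun i => ((e i).1 : Set X))
    fun i => by simpa using (hIio i).trans_le (hsS _ (e i).1.2)
  refine ⟨Function.extend p (fun i => (e i).2.1) 0, fun s hs n => ?_⟩
  let q : ι → X := fun a => p (Function.surjInv he (⟨s, hs⟩, n, a))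
  have hq : Function.Injective q := fun a b hab => by
    simpa using Function.injective_surjInv he (hp_inj hab)
  have hqs : ∀ a, q a ∈ s ∩ Function.extend p (fun i => (e i).2.1) 0 ⁻¹' {n} := fun a => by
    refine ⟨?_, ?_⟩
    · simpa [Function.surjInv_eq he] using hp (Function.surjInv he (⟨s, hs⟩, n, a))
    · simp [q, hp_inj.extend_apply, Function.surjInv_eq he]
  calc κ = #ι := (mk_ord_toType κ).symm
    _ ≤ _ := mk_le_of_injective (f := fun a => (⟨q a, hqs a⟩ : ↥(s ∩ _)))
      fun a b hab => hq (congrArg Subtype.val hab)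

theorem mk_setOf_isClosed_le_continuum (X : Type*) [TopologicalSpace X]
    [SecondCountableTopology X] :
    #{C : Set X | IsClosed C} ≤ 𝔠 := by
  obtain ⟨b, hbc, -, hb⟩ := TopologicalSpace.exists_countable_basis X
  have hinj : InjOn (fun C : Set X => {s : b | (s : Set X) ⊆ Cᶜ}) {C | IsClosed C} := by
    intro C₁ hC₁ C₂ hC₂ hC
    rw [← compl_inj_iff, hb.open_eq_sUnion' hC₁.isOpen_compl, hb.open_eq_sUnion' hC₂.isOpen_compl]
    congr 1
    ext s
    simp only [mem_ofPred_eq, and_congr_right_iff]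
    exact fun hs => Set.ext_iff.1 hC ⟨s, hs⟩
  calc #{C : Set X | IsClosed C} ≤ #(Set b) := mk_le_of_injective hinj.injective
    _ ≤ 𝔠 := by
      rw [mk_set, ← two_power_aleph0]
      exact power_le_power_left two_ne_zero hbc.le_aleph0

namespace IsCantorSet

variable {X : Type*} [TopologicalSpace X] {C : Set X}

theorem mk_eq_s16 (hC : IsCantorSet C) : #C = 𝔠 := by
  simpa using lift_mk_eq'.2 ⟨(Classical.choice hC).toEquiv⟩

theorem isClosed [T2Space X] (hC : IsCantorSet C) : IsClosed C :=
  (isCompact_iff_compactSpace.2 (Classical.choice hC).symm.compactSpace).isClosed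

theorem continuum_le_mk_diff (hC : IsCantorSet C) {D : Set X} (hD : D.Countable) :
    𝔠 ≤ #↥(C \ D) := by
  by_contra! h
  have : #C < 𝔠 := calc
    #C ≤ #↥(C \ D ∪ D) := mk_le_mk_of_subset (subset_sdiff_union C D)
    _ ≤ #↥(C \ D) + #D := mk_union_le _ _
    _ < 𝔠 := add_lt_of_lt aleph0_le_continuum h (hD.le_aleph0.trans_lt aleph0_lt_continuum)
  exact this.ne hC.mk_eq_s16

end IsCantorSet

theorem exists_nat_fibers_not_countable_of_isCantorSet {X : Type*} [TopologicalSpace X] [T2Space X]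
    [SecondCountableTopology X] {D : Set X} (hD : D.Countable) :
    ∃ φ : X → ℕ, ∀ C, IsCantorSet C → ∀ n, ¬ (C \ D ∩ φ ⁻¹' {n}).Countable := by
  obtain ⟨φ, hφ⟩ := exists_nat_fibers_le_mk_inter aleph0_le_continuum
    ((· \ D) '' {C | IsCantorSet C})
    (calc _ ≤ #{C : Set X | IsCantorSet C} := mk_image_le
      _ ≤ #{C : Set X | IsClosed C} := mk_le_mk_of_subset fun C hC => hC.isClosed
      _ ≤ 𝔠 := mk_setOf_isClosed_le_continuum X)
    (by rintro _ ⟨C, hC, rfl⟩; exact hC.continuum_le_mk_diff hD)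
  refine ⟨φ, fun C hC n hcount => ?_⟩
  have := (hφ _ (mem_image_of_mem _ hC) n).trans hcount.le_aleph0
  exact aleph0_lt_continuum.not_ge this

theorem countable_setOf_eventually_eq {α : Type*} [Countable α] :
    {x : ℕ → α | ∃ c, ∀ᶠ n in atTop, x n = c}.Countable := by
  refine (countable_range fun p : List α × α => fun n => p.1.getD n p.2).mono ?_
  rintro x ⟨c, hc⟩
  obtain ⟨N, hN⟩ := eventually_atTop.1 hc
  refine ⟨(List.ofFn fun i : Fin N => x i, c), funext fun n => ?_⟩
  rcases lt_or_ge n N with hn | hn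
  · simp [hn]
  · simp [hn, hN n hn]

theorem tendsto_atTop_of_monotone_of_frequently_ne_succ {k : ℕ → ℕ} (hk : Monotone k)
    (hjump : ∃ᶠ n in atTop, k (n + 1) ≠ k n) : Tendsto k atTop atTop := by
  refine tendsto_atTop_atTop_of_monotone hk fun j => ?_
  induction j with
  | zero => exact ⟨0, Nat.zero_le _⟩
  | succ j ih =>
    obtain ⟨N, hN⟩ := ih
    obtain ⟨m, hm, hjm⟩ := frequently_atTop.1 hjump N
    exact ⟨m + 1, hN.trans_lt ((hk hm).trans_lt ((hk m.le_succ).lt_of_ne' hjm))⟩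

theorem initSeg_succ {β : Type*} (x : ℕ → β) (n : ℕ) :
    initSeg x (n + 1) = initSeg x n ++ [x n] := by
  simp only [initSeg, List.ofFn_succ', List.concat_eq_append]
  rfl

section HitCount

variable {g : ℕ → ℝ}

noncomputable def hitCount (g : ℕ → ℝ) (s : List ℝ) : ℕ :=
  s.foldl (fun k v => if g k ≤ v then k + 1 else k) 0

theorem hitCount_initSeg_succ (v : ℕ → ℝ) (n : ℕ) :
    hitCount g (initSeg v (n + 1)) =
      if g (hitCount g (initSeg v n)) ≤ v n then hitCount g (initSeg v n) + 1
      else hitCount g (initSeg v n) := by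
  rw [hitCount, hitCount, initSeg_succ, List.foldl_append]
  rfl

theorem eventually_lt_of_hitCount_eventually_eq {v : ℕ → ℝ} {c : ℕ}
    (hc : ∀ᶠ n in atTop, hitCount g (initSeg v n) = c) : ∀ᶠ n in atTop, v n < g c := by
  filter_upwards [hc, (tendsto_add_atTop_nat 1).eventually hc] with n hn hn1
  by_contra! h
  rw [hitCount_initSeg_succ, hn, if_pos h] at hn1
  omega

theorem monotone_hitCount_initSeg (v : ℕ → ℝ) : Monotone fun n => hitCount g (initSeg v n) :=
  monotone_nat_of_le_succ fun n => by
    rw [hitCount_initSeg_succ]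
    split_ifs <;> omega

theorem frequently_le_of_not_hitCount_eventually_eq (hg : Monotone g) {v : ℕ → ℝ}
    (hv : ¬ ∃ c, ∀ᶠ n in atTop, hitCount g (initSeg v n) = c) (j : ℕ) :
    ∃ᶠ n in atTop, g j ≤ v n := by
  set k : ℕ → ℕ := fun n => hitCount g (initSeg v n)
  have hjump : ∃ᶠ n in atTop, k (n + 1) ≠ k n := by
    refine fun h => hv (eventuallyConst_iff_exists_eventuallyEq.1 ?_)
    obtain ⟨N, hN⟩ := eventually_atTop.1 h
    exact eventuallyConst_atTop_nat.2 ⟨N, fun m hm => not_not.1 (hN m hm)⟩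
  have hhit : ∃ᶠ n in atTop, g (k n) ≤ v n := hjump.mono fun n hn => by
    by_contra h
    exact hn ((hitCount_initSeg_succ v n).trans (if_neg h))
  have hk : Tendsto k atTop atTop :=
    tendsto_atTop_of_monotone_of_frequently_ne_succ (monotone_hitCount_initSeg v) hjump
  exact (hhit.and_eventually (tendsto_atTop.1 hk j)).mono fun n hn =>
    (hg hn.2).trans hn.1

end HitCount

theorem playerIWinsGamma_of_monotone {g : ℕ → ℝ} (hg : Monotone g)
    (f : Branches (univ : Set (List ℕ)) → ℝ)
    (hf_const : ∀ x c, (∀ᶠ n in atTop, x.1 n = c) → g c < f x) (hf_lt : ∀ x, ∃ m, f x < g m) :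
    PlayerIWinsGamma f := by
  refine ⟨hitCount g, fun v => ⟨fun _ => mem_univ _, ?_⟩⟩
  set x : Branches (univ : Set (List ℕ)) := ⟨playI (hitCount g) v, fun _ => mem_univ _⟩
  by_cases hv : ∃ c, ∀ᶠ n in atTop, hitCount g (initSeg v n) = c
  · obtain ⟨c, hc⟩ := hv
    refine ne_of_gt (lt_of_le_of_lt ?_ (EReal.coe_lt_coe_iff.2 (hf_const x c hc)))
    exact limsup_le_of_le (by isBoundedDefault)
      ((eventually_lt_of_hitCount_eventually_eq hc).mono fun n hn => EReal.coe_le_coe_iff.2 hn.le)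
  · obtain ⟨m, hm⟩ := hf_lt x
    refine ne_of_lt (lt_of_lt_of_le (EReal.coe_lt_coe_iff.2 hm) ?_)
    exact le_limsup_of_frequently_le ((frequently_le_of_not_hitCount_eventually_eq hg hv m).mono
      fun n hn => EReal.coe_le_coe_iff.2 hn) (by isBoundedDefault)

/-- If `R ⊆ ℝ` contains an infinite strictly increasing sequence, then there is a function
`f : ℕ^ℕ → ℝ` with range contained in `R` such that Player I has a winning strategy in
`Γ(f)` and `C ∩ {f ≥ r}` is either uncountable or empty for every `r ∈ ℝ` and every
Cantor set `C ⊆ ℕ^ℕ`. -/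
theorem exists_playerI_wins_uncountable_or_empty_of_strictMono_seq
    (R : Set ℝ) (hR : ∃ g : ℕ → ℝ, StrictMono g ∧ ∀ n, g n ∈ R) :
    ∃ f : Branches (Set.univ : Set (List ℕ)) → ℝ,
      (∀ x, f x ∈ R) ∧
      PlayerIWinsGamma f ∧
      ∀ (r : ℝ) (C : Set (Branches (Set.univ : Set (List ℕ)))),
        IsCantorSet C →
          ¬ (C ∩ {x | r ≤ f x}).Countable ∨ C ∩ {x | r ≤ f x} = ∅ := by
  obtain ⟨g, hg, hgR⟩ := hR
  have : SecondCountableTopology (Branches (univ : Set (List ℕ))) :=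
    TopologicalSpace.Subtype.secondCountableTopology _
  let D : Set (Branches (univ : Set (List ℕ))) := {x | ∃ c, ∀ᶠ n in atTop, x.1 n = c}
  obtain ⟨φ, hφ⟩ := exists_nat_fibers_not_countable_of_isCantorSet
    (countable_setOf_eventually_eq.preimage Subtype.val_injective : D.Countable)
  classical
  let ψ : Branches (univ : Set (List ℕ)) → ℕ := fun x => if h : x ∈ D then h.choose + 1 else φ x
  have hψ_const (x c) (hc : ∀ᶠ n in atTop, x.1 n = c) : ψ x = c + 1 := by
    have hx : x ∈ D := ⟨c, hc⟩
    obtain ⟨n, hn, hn'⟩ := (hx.choose_spec.and hc).exists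
    simp only [ψ, dif_pos hx, ← hn, hn']
  refine ⟨fun x => g (ψ x), fun x => hgR _, playerIWinsGamma_of_monotone hg.monotone _
    (fun x c hc => by simpa only [hψ_const x c hc] using hg (lt_add_one c))
    (fun x => ⟨ψ x + 1, hg (lt_add_one _)⟩), fun r C hC => ?_⟩
  by_cases hr : ∃ n, r ≤ g n
  · obtain ⟨n, hn⟩ := hr
    refine Or.inl fun hcount => hφ C hC n (hcount.mono ?_)
    rintro x ⟨⟨hxC, hxD⟩, rfl⟩
    have hψ : ψ x = φ x := dif_neg hxD
    exact ⟨hxC, show r ≤ g (ψ x) by rwa [hψ]⟩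
  · simp only [not_exists, not_le] at hr
    exact Or.inr (eq_empty_of_forall_notMem fun x hx => (hr (ψ x)).not_ge hx.2)
end

section
/- Let T be a pruned tree on a non-empty countable set A, let X be the set of infinite branches of T with its cylinder-set topology, and let f : X → ℝ. The following are equivalent: (1) Player II has a winning strategy in the game Γ'(f); (2) Player II has winning strategies in both games Γ(f) and Γ(−f); (3) f is of Baire class 1, i.e., f is the pointwise limit of a sequence of continuous functions X → ℝ. -/
open Filter Topology

/-!
If `f = limsup aₖ = liminf bₖ` with all `aₖ, bₖ` locally constant, then for each `n` one waits for
the first `t` with `bₙ₊ₜ ≤ max (aₙ, …, aₙ₊ₜ) + 1/(n+1)`. That maximum is a locally constant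
function of the point and lies between `bₙ₊ₜ - 1/(n+1)` and `sup_{k ≥ n} aₖ`, so it converges
to `f`. Conversely, if `f = lim gₙ` with `gₙ` continuous, Player II answers a position `s` with
the value of `g_N` at some branch through `s`, where `N ≤ |s|` is largest such that `g_N`
oscillates by at most `1/(N+1)` on the cylinder of `s`; continuity forces `N → ∞` along every
branch. The liminf half of `Γ'(f)` is a limsup strategy for `-f` in disguise.
-/

section Crossing

variable (a b : ℕ → ℝ) (n : ℕ) (δ : ℝ)

-- `sInf ∅ = 0`: only meaningful when some `t` qualifies.
noncomputable def crossingTime : ℕ :=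
  sInf {t | b (n + t) ≤ partialSups (fun k => a (n + k)) t + δ}

noncomputable def crossingValue : ℝ :=
  partialSups (fun k => a (n + k)) (crossingTime a b n δ)

variable {a b n δ}

lemma partialSups_congr {α : Type*} [SemilatticeSup α] {f g : ℕ → α} {t : ℕ}
    (h : ∀ j ≤ t, f j = g j) : partialSups f t = partialSups g t :=
  le_antisymm (partialSups_le _ _ _ fun j hj => (h j hj).le.trans (le_partialSups_of_le g hj))
    (partialSups_le _ _ _ fun j hj => (h j hj).ge.trans (le_partialSups_of_le f hj))

lemma Nat.sInf_setOf_eq_of_forall_le_iff {p q : ℕ → Prop} (hp : ∃ t, p t)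
    (h : ∀ t ≤ sInf {t | p t}, q t ↔ p t) : sInf {t | q t} = sInf {t | p t} := by
  have hq : q (sInf {t | p t}) := (h _ le_rfl).2 (Nat.sInf_mem hp)
  refine le_antisymm (Nat.sInf_le hq) (le_csInf ⟨_, hq⟩ fun t ht => not_lt.1 fun hlt => ?_)
  exact Nat.notMem_of_lt_sInf hlt ((h t hlt.le).1 ht)

lemma exists_crossing {r : ℝ} (ha : (r : EReal) ≤ limsup (fun k => (a k : EReal)) atTop)
    (hb : liminf (fun k => (b k : EReal)) atTop ≤ r) (n : ℕ) (hδ : 0 < δ) :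
    ∃ t, b (n + t) ≤ partialSups (fun k => a (n + k)) t + δ := by
  have hfa : ∃ᶠ k in atTop, r - δ / 2 < a k := by
    refine (frequently_lt_of_lt_limsup (by isBoundedDefault) (lt_of_lt_of_le ?_ ha)).mono
      fun k hk => EReal.coe_lt_coe_iff.1 hk
    exact EReal.coe_lt_coe_iff.2 (by linarith)
  have hfb : ∃ᶠ k in atTop, b k < r + δ / 2 := by
    refine (frequently_lt_of_liminf_lt (by isBoundedDefault) (lt_of_le_of_lt hb ?_)).mono
      fun k hk => EReal.coe_lt_coe_iff.1 hk
    exact EReal.coe_lt_coe_iff.2 (by linarith)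
  obtain ⟨i, hni, hi⟩ := frequently_atTop.1 hfa n
  obtain ⟨j, hij, hj⟩ := frequently_atTop.1 hfb i
  have hai : a i ≤ partialSups (fun k => a (n + k)) (j - n) := by
    simpa [Nat.add_sub_cancel' hni] using
      le_partialSups_of_le (fun k => a (n + k)) (Nat.sub_le_sub_right hij n)
  exact ⟨j - n, by rw [Nat.add_sub_cancel' (hni.trans hij)]; linarith⟩

lemma crossingTime_spec (h : ∃ t, b (n + t) ≤ partialSups (fun k => a (n + k)) t + δ) :
    b (n + crossingTime a b n δ) ≤ crossingValue a b n δ + δ :=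
  Nat.sInf_mem h

lemma crossingValue_le {c : ℝ} (h : ∀ k ≥ n, a k ≤ c) : crossingValue a b n δ ≤ c :=
  partialSups_le _ _ _ fun j _ => h _ (Nat.le_add_right n j)

lemma crossingValue_congr {a' b' : ℕ → ℝ}
    (h : ∃ t, b (n + t) ≤ partialSups (fun k => a (n + k)) t + δ)
    (hab : ∀ k ≤ n + crossingTime a b n δ, a' k = a k ∧ b' k = b k) :
    crossingValue a' b' n δ = crossingValue a b n δ := by
  have htime : crossingTime a' b' n δ = crossingTime a b n δ := by
    refine Nat.sInf_setOf_eq_of_forall_le_iff h fun t ht => ?_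
    rw [(hab (n + t) (by unfold crossingTime; omega)).2,
      partialSups_congr fun j hj => (hab (n + j) (by unfold crossingTime; omega)).1]
  rw [crossingValue, htime]
  exact partialSups_congr fun j hj => (hab (n + j) (by omega)).1

lemma tendsto_crossingValue {r : ℝ} (ha : (r : EReal) = limsup (fun k => (a k : EReal)) atTop)
    (hb : (r : EReal) = liminf (fun k => (b k : EReal)) atTop) :
    Tendsto (fun n : ℕ => crossingValue a b n (1 / (n + 1))) atTop (𝓝 r) := by
  refine tendsto_order.2 ⟨fun c hc => ?_, fun c hc => ?_⟩
  · obtain ⟨c', hcc', hc'r⟩ := exists_between hc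
    have hb' : ∀ᶠ k in atTop, c' < b k :=
      (eventually_lt_of_lt_liminf (hb ▸ EReal.coe_lt_coe_iff.2 hc'r) (by isBoundedDefault)).mono
        fun k hk => EReal.coe_lt_coe_iff.1 hk
    have hsmall : ∀ᶠ n : ℕ in atTop, 1 / ((n : ℝ) + 1) < c' - c :=
      tendsto_one_div_add_atTop_nhds_zero_nat.eventually (gt_mem_nhds (by linarith))
    filter_upwards [eventually_forall_ge_atTop.2 hb', hsmall] with n hn hn'
    have := crossingTime_spec (exists_crossing ha.le hb.ge n (Nat.one_div_pos_of_nat (n := n)))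
    linarith [hn _ (Nat.le_add_right n (crossingTime a b n (1 / (n + 1))))]
  · obtain ⟨c', hrc', hc'c⟩ := exists_between hc
    have ha' : ∀ᶠ k in atTop, a k < c' :=
      (eventually_lt_of_limsup_lt (ha ▸ EReal.coe_lt_coe_iff.2 hrc') (by isBoundedDefault)).mono
        fun k hk => EReal.coe_lt_coe_iff.1 hk
    filter_upwards [eventually_forall_ge_atTop.2 ha'] with n hn
    exact (crossingValue_le fun k hk => (hn k hk).le).trans_lt hc'c

end Crossing

theorem baireClassOne_of_limsup_eq_liminf {X : Type*} [TopologicalSpace X] {f : X → ℝ}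
    {a b : ℕ → X → ℝ} (ha : ∀ k, IsLocallyConstant (a k)) (hb : ∀ k, IsLocallyConstant (b k))
    (hfa : ∀ x, (f x : EReal) = limsup (fun k => (a k x : EReal)) atTop)
    (hfb : ∀ x, (f x : EReal) = liminf (fun k => (b k x : EReal)) atTop) :
    BaireClassOne f := by
  refine ⟨fun n x => crossingValue (a · x) (b · x) n (1 / (n + 1)), fun n => ?_,
    fun x => tendsto_crossingValue (hfa x) (hfb x)⟩
  refine (IsLocallyConstant.iff_eventually_eq _).2 (fun x => ?_) |>.continuous
  have hagree : ∀ᶠ y in 𝓝 x, ∀ k ∈ Set.Iic (n + crossingTime (a · x) (b · x) n (1 / (n + 1))),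
      a k y = a k x ∧ b k y = b k x :=
    (Set.finite_Iic _).eventually_all.2 fun k _ =>
      ((IsLocallyConstant.iff_eventually_eq _).1 (ha k) x).and
        ((IsLocallyConstant.iff_eventually_eq _).1 (hb k) x)
  filter_upwards [hagree] with y hy
  exact crossingValue_congr
    (exists_crossing (hfa x).le (hfb x).ge n (Nat.one_div_pos_of_nat (n := n))) hy

theorem PiNat.hasAntitoneBasis_nhds_cylinder {E : ℕ → Type*} [∀ n, TopologicalSpace (E n)]
    [∀ n, DiscreteTopology (E n)] (x : ∀ n, E n) : (𝓝 x).HasAntitoneBasis (cylinder x) := by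
  refine ⟨⟨fun U => ⟨fun hU => ?_, fun ⟨n, _, hn⟩ => mem_of_superset
    ((isOpen_cylinder E x n).mem_nhds (self_mem_cylinder x n)) hn⟩⟩, fun _ _ => cylinder_anti x⟩
  obtain ⟨_, ⟨y, n, rfl⟩, hxy, hU⟩ := (isTopologicalBasis_cylinders E).mem_nhds_iff.1 hU
  exact ⟨n, trivial, mem_cylinder_iff_eq.1 hxy ▸ hU⟩

@[simp]
lemma length_initSeg {β : Type*} (x : ℕ → β) (n : ℕ) : (initSeg x n).length = n := by
  simp [initSeg]

lemma initSeg_eq_initSeg_iff {β : Type*} {x y : ℕ → β} {n : ℕ} :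
    initSeg x n = initSeg y n ↔ ∀ i < n, x i = y i := by
  simp only [initSeg, List.ofFn_inj, funext_iff, Fin.forall_iff]

section Branches

variable {A : Type*} {T : Set (List A)}

lemma cyl_initSeg (x : Branches T) (n : ℕ) :
    cyl T (initSeg x.val n) = Subtype.val ⁻¹' PiNat.cylinder x.val n := by
  ext y
  simp [cyl, initSeg_eq_initSeg_iff, PiNat.mem_cylinder_iff]

variable [TopologicalSpace A] [DiscreteTopology A]

lemma hasAntitoneBasis_nhds_cyl (x : Branches T) :
    (𝓝 x).HasAntitoneBasis fun n => cyl T (initSeg x.val n) := by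
  simp only [cyl_initSeg, nhds_induced]
  exact (PiNat.hasAntitoneBasis_nhds_cylinder x.val).comap Subtype.val

lemma isLocallyConstant_initSeg (n : ℕ) :
    IsLocallyConstant fun x : Branches T => initSeg x.val n := by
  refine (IsLocallyConstant.iff_eventually_eq _).2 fun x => ?_
  filter_upwards [(hasAntitoneBasis_nhds_cyl x).mem n] with y hy
  simpa [cyl] using hy

lemma Continuous.eventually_dist_le_on_cyl {E : Type*} [PseudoMetricSpace E]
    {g : Branches T → E} (hg : Continuous g) (x : Branches T) {ε : ℝ} (hε : 0 < ε) :
    ∀ᶠ m in atTop, ∀ y ∈ cyl T (initSeg x.val m), ∀ z ∈ cyl T (initSeg x.val m),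
      dist (g y) (g z) ≤ ε := by
  filter_upwards [(hasAntitoneBasis_nhds_cyl x).eventually_subset
    (hg.continuousAt.preimage_mem_nhds (Metric.ball_mem_nhds (g x) (half_pos hε)))]
    with m hm y hy z hz
  linarith [dist_triangle_right (g y) (g z) (g x), Metric.mem_ball.1 (hm hy),
    Metric.mem_ball.1 (hm hz)]

theorem exists_tendsto_initSeg_of_baireClassOne {f : Branches T → ℝ} (hf : BaireClassOne f) :
    ∃ τ : List A → ℝ, ∀ x : Branches T,
      Tendsto (fun t => τ (initSeg x.val t)) atTop (𝓝 (f x)) := by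
  classical
  obtain ⟨g, hgc, hgf⟩ := hf
  let Small (s : List A) (k : ℕ) : Prop :=
    ∀ y ∈ cyl T s, ∀ z ∈ cyl T s, dist (g k y) (g k z) ≤ 1 / (k + 1)
  let N (s : List A) : ℕ := Nat.findGreatest (Small s) s.length
  let τ (s : List A) : ℝ := if h : (cyl T s).Nonempty then g (N s) h.some else 0
  refine ⟨τ, fun x => ?_⟩
  have hSmall (k : ℕ) : ∀ᶠ m in atTop, Small (initSeg x.val m) k :=
    (hgc k).eventually_dist_le_on_cyl x Nat.one_div_pos_of_nat
  have hN : Tendsto (fun m => N (initSeg x.val m)) atTop atTop := by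
    refine tendsto_atTop.2 fun K => ?_
    filter_upwards [hSmall K, eventually_ge_atTop K] with m hm hKm
    exact Nat.le_findGreatest (by simpa using hKm) hm
  have hx (m : ℕ) : x ∈ cyl T (initSeg x.val m) := by simp [cyl]
  have hclose : ∀ᶠ m in atTop, dist (g (N (initSeg x.val m)) x) (τ (initSeg x.val m))
      ≤ 1 / (N (initSeg x.val m) + 1) := by
    filter_upwards [hSmall 0] with m hm
    rw [show τ (initSeg x.val m) = _ from dif_pos ⟨x, hx m⟩]
    exact Nat.findGreatest_spec (Nat.zero_le _) hm x (hx m) _ (Set.Nonempty.some_mem _)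
  refine ((hgf x).comp hN).congr_dist (squeeze_zero' (.of_forall fun _ => dist_nonneg) hclose ?_)
  exact tendsto_one_div_add_atTop_nhds_zero_nat.comp hN

end Branches

lemma EReal.liminf_coe_neg {ι : Type*} {l : Filter ι} (c : ι → ℝ) :
    liminf (fun i => ((-c i : ℝ) : EReal)) l = -limsup (fun i => (c i : EReal)) l := by
  simp only [EReal.coe_neg]
  exact EReal.liminf_neg

section Games

variable {A : Type*} {T : Set (List A)} {f : Branches T → ℝ}

lemma playerIIWinsGamma_neg_iff :
    PlayerIIWinsGamma (fun x => -f x) ↔ ∃ v : List A → ℝ, ∀ x : Branches T,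
      (f x : EReal) = liminf (fun t : ℕ => (v (initSeg x.val (t + 1)) : EReal)) atTop := by
  have key (w : List A → ℝ) (x : Branches T) :
      ((-f x : ℝ) : EReal) = limsup (fun t : ℕ => (w (initSeg x.val (t + 1)) : EReal)) atTop ↔
        (f x : EReal) = liminf (fun t : ℕ => ((-w (initSeg x.val (t + 1)) : ℝ) : EReal)) atTop := by
    rw [EReal.liminf_coe_neg, EReal.coe_neg, neg_eq_iff_eq_neg]
  constructor
  · rintro ⟨w, hw⟩
    exact ⟨fun s => -w s, fun x => (key w x).1 (hw x)⟩
  · rintro ⟨v, hv⟩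
    refine ⟨fun s => -v s, fun x => (key (fun s => -v s) x).2 ?_⟩
    simpa only [neg_neg] using hv x

lemma playerIIWinsGamma'_iff_and :
    PlayerIIWinsGamma' f ↔ PlayerIIWinsGamma f ∧ PlayerIIWinsGamma (fun x => -f x) := by
  rw [playerIIWinsGamma_neg_iff]
  constructor
  · rintro ⟨τ, hτ⟩
    exact ⟨⟨fun s => (τ s).1, fun x => (hτ x).1⟩, ⟨fun s => (τ s).2, fun x => (hτ x).2⟩⟩
  · rintro ⟨⟨u, hu⟩, ⟨v, hv⟩⟩
    exact ⟨fun s => (u s, v s), fun x => ⟨hu x, hv x⟩⟩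

variable [TopologicalSpace A] [DiscreteTopology A]

lemma PlayerIIWinsGamma'.baireClassOne (h : PlayerIIWinsGamma' f) : BaireClassOne f := by
  obtain ⟨τ, hτ⟩ := h
  exact baireClassOne_of_limsup_eq_liminf
    (fun k => (isLocallyConstant_initSeg (k + 1)).comp fun s => (τ s).1)
    (fun k => (isLocallyConstant_initSeg (k + 1)).comp fun s => (τ s).2)
    (fun x => (hτ x).1) (fun x => (hτ x).2)

lemma BaireClassOne.playerIIWinsGamma' (hf : BaireClassOne f) : PlayerIIWinsGamma' f := by
  obtain ⟨τ, hτ⟩ := exists_tendsto_initSeg_of_baireClassOne hf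
  refine ⟨fun s => (τ s, τ s), fun x => ?_⟩
  have h : Tendsto (fun t : ℕ => (τ (initSeg x.val (t + 1)) : EReal)) atTop (𝓝 (f x)) :=
    (continuous_coe_real_ereal.tendsto _).comp ((tendsto_add_atTop_iff_nat 1).2 (hτ x))
  exact ⟨h.limsup_eq.symm, h.liminf_eq.symm⟩

end Games

theorem playerII_wins_gamma'_iff_general
    {A : Type*} [TopologicalSpace A] [DiscreteTopology A]
    {T : Set (List A)} (f : Branches T → ℝ) :
    (PlayerIIWinsGamma' f ↔
      PlayerIIWinsGamma f ∧ PlayerIIWinsGamma (fun x => -f x)) ∧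
    (PlayerIIWinsGamma' f ↔ BaireClassOne f) :=
  ⟨playerIIWinsGamma'_iff_and,
    ⟨PlayerIIWinsGamma'.baireClassOne, BaireClassOne.playerIIWinsGamma'⟩⟩

/-- Player II has a winning strategy in `Γ'(f)` iff Player II has winning strategies in
both `Γ(f)` and `Γ(-f)`, iff `f` is of Baire class 1. -/
theorem playerII_wins_gamma'_iff
    {A : Type*} [Countable A] [Nonempty A] [TopologicalSpace A] [DiscreteTopology A]
    {T : Set (List A)} (hT : IsPrunedTree T) (f : Branches T → ℝ) :
    (PlayerIIWinsGamma' f ↔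
      PlayerIIWinsGamma f ∧ PlayerIIWinsGamma (fun x => -f x)) ∧
    (PlayerIIWinsGamma' f ↔ BaireClassOne f) :=
  playerII_wins_gamma'_iff_general f
end

section
/- Let T be a pruned tree on a non-empty countable set A, let X be the set of infinite branches of T with its cylinder-set topology, and let f : X → ℝ. Suppose there is a non-empty closed set C ⊆ X such that the oscillation of f restricted to C is bounded away from zero, i.e., inf_{x ∈ C} osc_f(C,x) > 0, where osc_f(C,x) = inf over s ∈ T with x ∈ O(s) of sup_{y,z ∈ O(s) ∩ C} |f(y) − f(z)|. Then Player I has a winning strategy in the game Γ'(f). -/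
open Filter Topology

/-- The oscillation of `f` restricted to `C` at the point `x`:
`osc_f(C,x) = inf_{s ∈ T, x ∈ O(s)} sup_{y,z ∈ O(s) ∩ C} |f y - f z|` (computed in the
extended reals). -/
noncomputable def oscOn {A : Type*} {T : Set (List A)} (f : Branches T → ℝ)
    (C : Set (Branches T)) (x : Branches T) : EReal :=
  ⨅ (s : List A) (_ : s ∈ T) (_ : x ∈ cyl T s),
    ⨆ y ∈ cyl T s ∩ C, ⨆ z ∈ cyl T s ∩ C, ((|f y - f z| : ℝ) : EReal)


/-!
Player I keeps following a branch `p ∈ C`. Once Player II has played some `w ≤ f p + δ` and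
later some `v ≥ f p - δ`, Player I jumps to a branch `q ∈ C` that extends the moves made so far
and has `|f q - f p| ≥ 4 δ`; the oscillation bound provides such a `q` for `δ = ε / 16`.
If Player I jumps only finitely often, the run is the last branch `p`, and from some time on
Player II has either kept `v < f p - δ` or kept `w > f p + δ`, so Player II loses.
If Player I jumps infinitely often while Player II wins with value `L`, then eventually
`v < L + δ` and `w > L - δ`; a branch `p` entered and left late enough was left on some
`v ≥ f p - δ` after some `w ≤ f p + δ`, so `|f p - L| < 2 δ`, and two consecutive such branches
cannot be `4 δ` apart.
-/

section Limits

variable {ι : Type*} {l : Filter ι} {u : ι → ℝ} {L c : ℝ}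

theorem eventually_lt_of_coe_eq_limsup (h : (L : EReal) = limsup (fun t => (u t : EReal)) l)
    (hc : L < c) : ∀ᶠ t in l, u t < c := by
  have : limsup (fun t => (u t : EReal)) l < c := h ▸ EReal.coe_lt_coe hc
  filter_upwards [eventually_lt_of_limsup_lt this] with t ht using EReal.coe_lt_coe_iff.mp ht

theorem frequently_lt_of_coe_eq_limsup (h : (L : EReal) = limsup (fun t => (u t : EReal)) l)
    (hc : c < L) : ∃ᶠ t in l, c < u t := by
  have : (c : EReal) < limsup (fun t => (u t : EReal)) l := h ▸ EReal.coe_lt_coe hc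
  exact (frequently_lt_of_lt_limsup (by isBoundedDefault) this).mono
    fun t ht => EReal.coe_lt_coe_iff.mp ht

theorem eventually_lt_of_coe_eq_liminf (h : (L : EReal) = liminf (fun t => (u t : EReal)) l)
    (hc : c < L) : ∀ᶠ t in l, c < u t := by
  have : (c : EReal) < liminf (fun t => (u t : EReal)) l := h ▸ EReal.coe_lt_coe hc
  filter_upwards [eventually_lt_of_lt_liminf this] with t ht using EReal.coe_lt_coe_iff.mp ht

theorem frequently_lt_of_coe_eq_liminf (h : (L : EReal) = liminf (fun t => (u t : EReal)) l)
    (hc : L < c) : ∃ᶠ t in l, u t < c := by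
  have : liminf (fun t => (u t : EReal)) l < c := h ▸ EReal.coe_lt_coe hc
  exact (frequently_lt_of_liminf_lt (by isBoundedDefault) this).mono
    fun t ht => EReal.coe_lt_coe_iff.mp ht

end Limits

theorem eventually_eq_or_forall_exists_ne_succ {α : Type*} (p : ℕ → α) :
    (∃ P, ∀ᶠ n in atTop, p n = P) ∨ ∀ a, ∃ b ≥ a, p (b + 1) ≠ p b ∧ p b = p a := by
  classical
  by_cases hjumps : ∀ N, ∃ n ≥ N, p (n + 1) ≠ p n
  · refine Or.inr fun a => ?_
    have hex : ∃ b, a ≤ b ∧ p (b + 1) ≠ p b := hjumps a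
    obtain ⟨hab, hjump⟩ := Nat.find_spec hex
    have hconst : ∀ k, a ≤ k → k ≤ Nat.find hex → p k = p a := by
      intro k hak
      induction k, hak using Nat.le_induction with
      | base => exact fun _ => rfl
      | succ k hak ih =>
        intro hk
        rw [← ih (Nat.le_of_succ_le hk)]
        by_contra hne
        exact Nat.find_min hex hk ⟨hak, hne⟩
    exact ⟨_, hab, hjump, hconst _ hab le_rfl⟩
  · push Not at hjumps
    obtain ⟨N, hN⟩ := hjumps
    refine Or.inl ⟨p N, eventually_atTop.2 ⟨N, fun n hn => ?_⟩⟩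
    induction n, hn using Nat.le_induction with
    | base => rfl
    | succ n hn ih => exact (hN n hn).trans ih

theorem exists_playI_eq {A M : Type*} [Inhabited M] (ρ : (ℕ → M) → ℕ → A)
    (hρ : ∀ v v' n, (∀ i < n, v i = v' i) → ρ v n = ρ v' n) :
    ∃ σ : List M → A, ∀ v, playI σ v = ρ v := by
  refine ⟨fun l => ρ (fun i => l.getD i default) l.length, fun v => funext fun n => ?_⟩
  simp only [playI, initSeg, List.length_ofFn]
  exact hρ _ _ n fun i hi => by simp [hi]

section Branches

variable {A : Type*} {T : Set (List A)}

theorem mem_cyl_initSeg_iff {p q : Branches T} {n : ℕ} :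
    q ∈ cyl T (initSeg p.val n) ↔ ∀ k < n, q.val k = p.val k := by
  simp [cyl, initSeg, List.ofFn_inj, funext_iff, Fin.forall_iff]

theorem exists_mem_cyl_inter_half_lt_abs_sub (f : Branches T → ℝ) (C : Set (Branches T))
    {x : Branches T} {s : List A} (hs : s ∈ T) (hx : x ∈ cyl T s) {c : ℝ}
    (hc : (c : EReal) < oscOn f C x) : ∃ q ∈ cyl T s ∩ C, c / 2 < |f q - f x| := by
  have hsup : (c : EReal) < ⨆ y ∈ cyl T s ∩ C, ⨆ z ∈ cyl T s ∩ C, ((|f y - f z| : ℝ) : EReal) :=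
    hc.trans_le (iInf₂_le_of_le s hs (iInf_le _ hx))
  simp only [lt_iSup_iff, EReal.coe_lt_coe_iff] at hsup
  obtain ⟨y, hy, z, hz, hyz⟩ := hsup
  by_contra! hfar
  linarith [abs_sub_le (f y) (f x) (f z), abs_sub_comm (f x) (f z), hfar y hy, hfar z hz]

section Diagonal

variable {p : ℕ → Branches T}

theorem val_apply_eq_of_le (hp : ∀ n, p (n + 1) ∈ cyl T (initSeg (p n).val (n + 1)))
    {k n : ℕ} (hkn : k ≤ n) : (p n).val k = (p k).val k := by
  induction n, hkn using Nat.le_induction with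
  | base => rfl
  | succ n hkn ih => exact (mem_cyl_initSeg_iff.mp (hp n) k (Nat.lt_succ_of_le hkn)).trans ih

theorem initSeg_diag_mem (hp : ∀ n, p (n + 1) ∈ cyl T (initSeg (p n).val (n + 1)))
    (n : ℕ) : initSeg (fun k => (p k).val k) n ∈ T := by
  have : initSeg (fun k => (p k).val k) n = initSeg (p n).val n := by
    simp only [initSeg]
    congr 1
    funext k
    exact (val_apply_eq_of_le hp k.is_lt.le).symm
  exact this ▸ (p n).prop n

theorem diag_eq_of_eventually_eq (hp : ∀ n, p (n + 1) ∈ cyl T (initSeg (p n).val (n + 1)))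
    {P : Branches T} (hP : ∀ᶠ n in atTop, p n = P) :
    (fun k => (p k).val k) = P.val := by
  obtain ⟨N, hN⟩ := eventually_atTop.mp hP
  funext k
  rw [← val_apply_eq_of_le hp (le_max_left k N), hN _ (le_max_right k N)]

end Diagonal

/-- The flag records whether Player II has played some `w ≤ f p + δ` since Player I moved to the
current branch `p`. -/
noncomputable def pursuit (f : Branches T → ℝ) (δ : ℝ) (Q : Branches T → ℕ → Branches T)
    (p₀ : Branches T) (v : ℕ → ℝ × ℝ) : ℕ → Branches T × Bool
  | 0 => (p₀, false)
  | n + 1 =>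
    let s := pursuit f δ Q p₀ v n
    if s.2 ∧ f s.1 - δ ≤ (v n).1 then (Q s.1 n, false)
    else (s.1, s.2 || decide ((v n).2 ≤ f s.1 + δ))

section Pursuit

variable {f : Branches T → ℝ} {δ : ℝ} {Q : Branches T → ℕ → Branches T} {p₀ : Branches T}
  {v : ℕ → ℝ × ℝ}

local notation "𝔭" => pursuit f δ Q p₀ v

theorem pursuit_congr {v' : ℕ → ℝ × ℝ} {n : ℕ} (h : ∀ i < n, v i = v' i) :
    𝔭 n = pursuit f δ Q p₀ v' n := by
  induction n with
  | zero => rfl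
  | succ n ih =>
    simp only [pursuit, ih fun i hi => h i (Nat.lt_succ_of_lt hi), h n (Nat.lt_succ_self n)]

theorem pursuit_succ_of_jump {n : ℕ} (h : (𝔭 n).2 ∧ f (𝔭 n).1 - δ ≤ (v n).1) :
    𝔭 (n + 1) = (Q (𝔭 n).1 n, false) := by
  simp only [pursuit, if_pos h]

theorem pursuit_succ_of_not_jump {n : ℕ} (h : ¬((𝔭 n).2 ∧ f (𝔭 n).1 - δ ≤ (v n).1)) :
    𝔭 (n + 1) = ((𝔭 n).1, (𝔭 n).2 || decide ((v n).2 ≤ f (𝔭 n).1 + δ)) := by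
  simp only [pursuit, if_neg h]

theorem jump_of_pursuit_succ_ne {n : ℕ} (h : (𝔭 (n + 1)).1 ≠ (𝔭 n).1) :
    (𝔭 n).2 ∧ f (𝔭 n).1 - δ ≤ (v n).1 := by
  by_contra hjump
  exact h (by rw [pursuit_succ_of_not_jump hjump])

theorem pursuit_mem {C : Set (Branches T)} (hp₀ : p₀ ∈ C) (hQ : ∀ p ∈ C, ∀ n, Q p n ∈ C)
    (n : ℕ) : (𝔭 n).1 ∈ C := by
  induction n with
  | zero => exact hp₀
  | succ n ih =>
    by_cases hjump : (𝔭 n).2 ∧ f (𝔭 n).1 - δ ≤ (v n).1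
    · rw [pursuit_succ_of_jump hjump]
      exact hQ _ ih n
    · rw [pursuit_succ_of_not_jump hjump]
      exact ih

theorem pursuit_succ_mem_cyl {C : Set (Branches T)} (hp₀ : p₀ ∈ C)
    (hQ : ∀ p ∈ C, ∀ n, Q p n ∈ cyl T (initSeg p.val (n + 1)) ∩ C) (n : ℕ) :
    (𝔭 (n + 1)).1 ∈ cyl T (initSeg (𝔭 n).1.val (n + 1)) := by
  by_cases hjump : (𝔭 n).2 ∧ f (𝔭 n).1 - δ ≤ (v n).1
  · rw [pursuit_succ_of_jump hjump]
    exact (hQ _ (pursuit_mem hp₀ (fun p hp n => (hQ p hp n).2) n) n).1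
  · rw [pursuit_succ_of_not_jump hjump]
    exact mem_cyl_initSeg_iff.mpr fun _ _ => rfl

theorem pursuit_armed {n : ℕ} (h : (𝔭 n).2) :
    ∃ m < n, (v m).2 ≤ f (𝔭 n).1 + δ ∧ ∀ k, m ≤ k → k ≤ n → (𝔭 k).1 = (𝔭 n).1 := by
  induction n with
  | zero => simp [pursuit] at h
  | succ n ih =>
    by_cases hjump : (𝔭 n).2 ∧ f (𝔭 n).1 - δ ≤ (v n).1
    · simp [pursuit_succ_of_jump hjump] at h
    have hstay : (𝔭 (n + 1)).1 = (𝔭 n).1 := by rw [pursuit_succ_of_not_jump hjump]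
    have harmed : (𝔭 n).2 ∨ (v n).2 ≤ f (𝔭 n).1 + δ := by
      simpa [pursuit_succ_of_not_jump hjump] using h
    rw [hstay]
    rcases harmed with harmed | hw
    · obtain ⟨m, hmn, hw, hconst⟩ := ih harmed
      refine ⟨m, hmn.trans (Nat.lt_succ_self n), hw, fun k hmk hkn => ?_⟩
      rcases Nat.le_succ_iff.mp hkn with hkn | rfl
      · exact hconst k hmk hkn
      · exact hstay
    · refine ⟨n, Nat.lt_succ_self n, hw, fun k hnk hkn => ?_⟩
      rcases Nat.le_succ_iff.mp hkn with hkn | rfl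
      · rw [le_antisymm hkn hnk]
      · exact hstay

theorem pursuit_eventually_lt_or_eventually_lt {P : Branches T} (hQP : ∀ n, Q P n ≠ P)
    (hP : ∀ᶠ n in atTop, (𝔭 n).1 = P) :
    (∀ᶠ n in atTop, (v n).1 < f P - δ) ∨ ∀ᶠ n in atTop, f P + δ < (v n).2 := by
  obtain ⟨N, hN⟩ := eventually_atTop.mp hP
  have hstay : ∀ n ≥ N, ¬((𝔭 n).2 ∧ f (𝔭 n).1 - δ ≤ (v n).1) := by
    intro n hn hjump
    have hnext := congrArg Prod.fst (pursuit_succ_of_jump hjump)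
    rw [hN (n + 1) (Nat.le_succ_of_le hn), hN n hn] at hnext
    exact hQP n hnext.symm
  have hflag : ∀ n ≥ N, (𝔭 (n + 1)).2 = ((𝔭 n).2 || decide ((v n).2 ≤ f P + δ)) := by
    intro n hn
    rw [pursuit_succ_of_not_jump (hstay n hn), hN n hn]
  by_cases harmed : ∃ M ≥ N, (𝔭 M).2
  · obtain ⟨M, hMN, hM⟩ := harmed
    have harmed : ∀ n ≥ M, (𝔭 n).2 := fun n hn => by
      induction n, hn using Nat.le_induction with
      | base => exact hM
      | succ n hn ih => rw [hflag n (hMN.trans hn), ih, Bool.true_or]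
    refine Or.inl (eventually_atTop.mpr ⟨M, fun n hn => ?_⟩)
    have hv := hstay n (hMN.trans hn)
    simp only [harmed n hn, hN n (hMN.trans hn), true_and, not_le] at hv
    linarith
  · push Not at harmed
    refine Or.inr (eventually_atTop.mpr ⟨N, fun n hn => ?_⟩)
    simpa [harmed n hn, harmed (n + 1) (Nat.le_succ_of_le hn)] using hflag n hn

theorem abs_sub_lt_of_pursuit_jump {L : ℝ} {t₀ i j : ℕ}
    (hv : ∀ t ≥ t₀, (v t).1 < L + δ ∧ L - δ < (v t).2) (hi : t₀ ≤ i) (hij : i < j)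
    (hborn : (𝔭 (i + 1)).1 ≠ (𝔭 i).1) (hleave : (𝔭 (j + 1)).1 ≠ (𝔭 j).1) : |f (𝔭 j).1 - L| < 2 * δ := by
  obtain ⟨harmed, hjump⟩ := jump_of_pursuit_succ_ne hleave
  obtain ⟨m, hmj, hw, hconst⟩ := pursuit_armed harmed
  have him : i < m := by
    by_contra! hmi
    exact hborn ((hconst (i + 1) (by omega) hij).trans (hconst i hmi (by omega)).symm)
  have hvj := hv j (by omega)
  have hvm := hv m (by omega)
  rw [abs_sub_lt_iff]
  constructor <;> linarith

theorem exists_eventually_pursuit_eq {C : Set (Branches T)} {L : ℝ} (hp₀ : p₀ ∈ C)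
    (hQC : ∀ p ∈ C, ∀ n, Q p n ∈ C) (hQfar : ∀ p ∈ C, ∀ n, 4 * δ ≤ |f (Q p n) - f p|)
    (hv : ∀ᶠ t in atTop, (v t).1 < L + δ ∧ L - δ < (v t).2) :
    ∃ P, ∀ᶠ n in atTop, (𝔭 n).1 = P := by
  -- Otherwise take three jumps `t₀ ≤ a < b < c`: the branches left at `b` and `c` are both
  -- `2 δ`-close to `L`, but the second one is `Q` of the first.
  refine (eventually_eq_or_forall_exists_ne_succ fun n => (𝔭 n).1).resolve_right
    fun hjumps => ?_
  obtain ⟨t₀, ht₀⟩ := eventually_atTop.mp hv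
  obtain ⟨a, ha, hjump_a, -⟩ := hjumps t₀
  obtain ⟨b, hb, hjump_b, -⟩ := hjumps (a + 1)
  obtain ⟨c, hc, hjump_c, hc_eq⟩ := hjumps (b + 1)
  have hPb := abs_sub_lt_of_pursuit_jump ht₀ ha (by omega) hjump_a hjump_b
  have hPc := abs_sub_lt_of_pursuit_jump ht₀ (by omega) (by omega) hjump_b hjump_c
  have hQb : (𝔭 c).1 = Q (𝔭 b).1 b := by
    rw [hc_eq, pursuit_succ_of_jump (jump_of_pursuit_succ_ne hjump_b)]
  have hfar : 4 * δ ≤ |f (𝔭 c).1 - f (𝔭 b).1| := hQb ▸ hQfar _ (pursuit_mem hp₀ hQC b) b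
  linarith [abs_sub_le (f (𝔭 c).1) L (f (𝔭 b).1), abs_sub_comm L (f (𝔭 b).1)]

end Pursuit

theorem playerIWinsGamma'_of_forall_exists_far {f : Branches T → ℝ} {C : Set (Branches T)}
    {p₀ : Branches T} {δ : ℝ} (hp₀ : p₀ ∈ C) (hδ : 0 < δ)
    (hfar : ∀ p ∈ C, ∀ n, ∃ q ∈ cyl T (initSeg p.val (n + 1)) ∩ C, 4 * δ ≤ |f q - f p|) :
    PlayerIWinsGamma' f := by
  choose! Q hQ hQfar using hfar
  have hQC : ∀ p ∈ C, ∀ n, Q p n ∈ C := fun p hp n => (hQ p hp n).2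
  obtain ⟨σ, hσ⟩ := exists_playI_eq (fun v n => (pursuit f δ Q p₀ v n).1.val n)
    fun v v' n h => by rw [pursuit_congr h]
  refine ⟨σ, fun v => ?_⟩
  have hcyl := pursuit_succ_mem_cyl (f := f) (δ := δ) (v := v) hp₀ hQ
  rw [hσ v]
  refine ⟨initSeg_diag_mem hcyl, ?_⟩
  rintro ⟨hlimsup, hliminf⟩
  obtain ⟨P, hP⟩ := exists_eventually_pursuit_eq hp₀ hQC hQfar
    ((eventually_lt_of_coe_eq_limsup hlimsup (lt_add_of_pos_right _ hδ)).and
      (eventually_lt_of_coe_eq_liminf hliminf (sub_lt_self _ hδ)))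
  have hxP : (⟨_, initSeg_diag_mem hcyl⟩ : Branches T) = P :=
    Subtype.ext (diag_eq_of_eventually_eq hcyl hP)
  rw [hxP] at hlimsup hliminf
  have hQP : ∀ n, Q P n ≠ P := by
    obtain ⟨m, hm⟩ := hP.exists
    intro n hQPn
    have := hQfar P (hm ▸ pursuit_mem hp₀ hQC m) n
    rw [hQPn, sub_self, abs_zero] at this
    linarith
  rcases pursuit_eventually_lt_or_eventually_lt hQP hP with hv | hw
  · obtain ⟨n, hn, hn'⟩ :=
      ((frequently_lt_of_coe_eq_limsup hlimsup (sub_lt_self _ hδ)).and_eventually hv).exists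
    exact lt_asymm hn hn'
  · obtain ⟨n, hn, hn'⟩ :=
      ((frequently_lt_of_coe_eq_liminf hliminf (lt_add_of_pos_right _ hδ)).and_eventually hw).exists
    exact lt_asymm hn hn'

end Branches

theorem playerI_wins_gamma'_of_osc_bounded_away_general
    {A : Type*} {T : Set (List A)} (f : Branches T → ℝ)
    (C : Set (Branches T)) (hCne : C.Nonempty)
    (hosc : ∃ ε : ℝ, 0 < ε ∧ ∀ x ∈ C, (ε : EReal) ≤ oscOn f C x) :
    PlayerIWinsGamma' f := by
  obtain ⟨ε, hε, hoscC⟩ := hosc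
  obtain ⟨p₀, hp₀⟩ := hCne
  refine playerIWinsGamma'_of_forall_exists_far (δ := ε / 16) hp₀ (by positivity)
    fun p hp n => ?_
  have hhalf : ((ε / 2 : ℝ) : EReal) < oscOn f C p :=
    (EReal.coe_lt_coe (half_lt_self hε)).trans_le (hoscC p hp)
  obtain ⟨q, hq, hfar⟩ := exists_mem_cyl_inter_half_lt_abs_sub f C (p.prop (n + 1))
    (mem_cyl_initSeg_iff.mpr fun _ _ => rfl) hhalf
  exact ⟨q, hq, by linarith⟩

/-- If there is a non-empty closed set `C ⊆ X` on which the oscillation of `f|_C` is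
bounded away from zero, then Player I has a winning strategy in `Γ'(f)`. -/
theorem playerI_wins_gamma'_of_osc_bounded_away
    {A : Type*} [Countable A] [Nonempty A] [TopologicalSpace A] [DiscreteTopology A]
    {T : Set (List A)} (hT : IsPrunedTree T) (f : Branches T → ℝ)
    (C : Set (Branches T)) (hCne : C.Nonempty) (hCclosed : IsClosed C)
    (hosc : ∃ ε : ℝ, 0 < ε ∧ ∀ x ∈ C, (ε : EReal) ≤ oscOn f C x) :
    PlayerIWinsGamma' f :=
  playerI_wins_gamma'_of_osc_bounded_away_general f C hCne hosc
end
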